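/- arXiv:1904.02313 — 4 statements merged into one kernel-verified Lean document; each statement's English description precedes it below -/
import Mathlib

section
/- For every positive integer s, the number of symmetric Dyck paths of order s equals C(s, ⌊s/2⌋). -/
/-- A Dyck path of order `s`, encoded as a list of booleans (`true` = north step `(0,1)`,
`false` = east step `(1,0)`): it has `2*s` steps, `s` of which are north steps, and in
every prefix the number of east steps does not exceed the number of north steps
(the path stays weakly above the diagonal `y = x`). -/
def IsDyckPath (s : ℕ) (l : List Bool) : Prop :=
  l.length = 2 * s ∧ l.count true = s ∧
    ∀ k, (l.take k).count false ≤ (l.take k).count true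

/-- A Dyck path of order `s` is symmetric if reading it backwards with north and east
steps interchanged (i.e. reflecting about the line `y = s - x`) gives the same path. -/
def IsSymmetricDyckPath (l : List Bool) : Prop :=
  l.reverse.map not = l

namespace SymDyck


lemma count_add (l : List Bool) : l.count true + l.count false = l.length := by
  induction l with
  | nil => simp
  | cons a t ih => cases a <;> simp [List.count_cons] <;> omega

def Bal (l : List Bool) : Prop := ∀ k, (l.take k).count false ≤ (l.take k).count true

def ballot : ℕ → Finset (List Bool)
  | 0 => {[]}
  | n+1 => ((ballot n).image (· ++ [true])) ∪
      (((ballot n).filter (fun l => n + 1 ≤ 2 * l.count true)).image (· ++ [false]))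

lemma bal_iff (l : List Bool) : Bal l ↔ ∀ k ≤ l.length, (l.take k).count false ≤ (l.take k).count true := by
  constructor
  · exact fun h k _ => h k
  · intro h k
    rcases le_or_gt k l.length with hk | hk
    · exact h k hk
    · rw [List.take_of_length_le hk.le]
      simpa using h l.length le_rfl

lemma mem_ballot {n : ℕ} {l : List Bool} :
    l ∈ ballot n ↔ l.length = n ∧ Bal l := by
  induction n generalizing l with
  | zero =>
    simp only [ballot, Finset.mem_singleton]
    constructor
    · rintro rfl; exact ⟨rfl, fun k => by simp⟩
    · rintro ⟨h, -⟩; exact List.length_eq_zero_iff.mp h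
  | succ n ih =>
    simp only [ballot, Finset.mem_union, Finset.mem_image, Finset.mem_filter]
    constructor
    · rintro (⟨a, ha, rfl⟩ | ⟨a, ⟨ha, hc⟩, rfl⟩)
      · obtain ⟨hlen, hbal⟩ := ih.mp ha
        refine ⟨by simp [hlen], ?_⟩
        intro k
        rcases le_or_gt k a.length with hk | hk
        · rw [List.take_append_of_le_length hk]; exact hbal k
        · rw [List.take_of_length_le (by simpa using hk)]
          simp only [List.count_append]
          have := hbal a.length
          rw [List.take_length] at this
          simp; omega
      · obtain ⟨hlen, hbal⟩ := ih.mp ha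
        have hsum := count_add a
        refine ⟨by simp [hlen], ?_⟩
        intro k
        rcases le_or_gt k a.length with hk | hk
        · rw [List.take_append_of_le_length hk]; exact hbal k
        · rw [List.take_of_length_le (by simpa using hk)]
          simp only [List.count_append]
          simp; omega
    · rintro ⟨hlen, hbal⟩
      rcases List.eq_nil_or_concat l with rfl | ⟨a, b, rfl⟩
      · simp at hlen
      · rw [List.concat_eq_append] at *
        have hal : a.length = n := by simpa using hlen
        have hbala : Bal a := by
          intro k
          have := hbal k
          rcases le_or_gt k a.length with hk | hk
          · rwa [List.take_append_of_le_length hk] at this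
          · rw [List.take_of_length_le hk.le]
            have h2 := hbal a.length
            rwa [List.take_append_of_le_length le_rfl, List.take_length] at h2
        have hfull := hbal (n+1)
        rw [List.take_of_length_le (by simp [hal])] at hfull
        simp only [List.count_append] at hfull
        have hsum := count_add a
        cases b
        · right
          exact ⟨a, ⟨ih.mpr ⟨hal, hbala⟩, by simp at hfull ⊢; omega⟩, rfl⟩
        · left
          exact ⟨a, ih.mpr ⟨hal, hbala⟩, rfl⟩

lemma ct (a : List Bool) : (a ++ [true]).count true = a.count true + 1 := by simp
lemma cf (a : List Bool) : (a ++ [false]).count true = a.count true := by simp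

def ballotc (n k : ℕ) : Finset (List Bool) := (ballot n).filter (fun l => l.count true = k)

lemma ballotc_succ (n k : ℕ) :
    ballotc (n+1) (k+1) = ((ballotc n k).image (· ++ [true])) ∪
      (if n + 1 ≤ 2 * (k+1) then (ballotc n (k+1)).image (· ++ [false]) else ∅) := by
  ext l
  simp only [ballotc, ballot, Finset.filter_union, Finset.mem_union, Finset.mem_filter,
    Finset.mem_image]
  constructor
  · rintro (⟨⟨a, ha, rfl⟩, hc⟩ | ⟨⟨a, ⟨ha, h2⟩, rfl⟩, hc⟩)
    · rw [ct] at hc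
      left
      exact ⟨a, ⟨ha, by omega⟩, rfl⟩
    · rw [cf] at hc
      right
      rw [if_pos (by omega)]
      simp only [Finset.mem_image, Finset.mem_filter]
      exact ⟨a, ⟨ha, hc⟩, rfl⟩
  · rintro (⟨a, ⟨ha, hc⟩, rfl⟩ | h)
    · exact Or.inl ⟨⟨a, ha, rfl⟩, by rw [ct, hc]⟩
    · split_ifs at h with hif
      · simp only [Finset.mem_image, Finset.mem_filter] at h
        obtain ⟨a, ⟨ha, hc⟩, rfl⟩ := h
        exact Or.inr ⟨⟨a, ⟨ha, by omega⟩, rfl⟩, by rw [cf, hc]⟩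
      · simp at h

lemma ballotc_zero_succ (n : ℕ) : ballotc (n+1) 0 = ∅ := by
  ext l
  simp only [ballotc, ballot, Finset.filter_union, Finset.mem_union, Finset.mem_filter,
    Finset.mem_image, Finset.notMem_empty, iff_false]
  rintro (⟨⟨a, ha, rfl⟩, hc⟩ | ⟨⟨a, ⟨ha, h2⟩, rfl⟩, hc⟩)
  · rw [ct] at hc; omega
  · rw [cf] at hc; omega


lemma ballotc_zero (k : ℕ) : ballotc 0 k = if k = 0 then {([] : List Bool)} else ∅ := by
  ext l
  simp only [ballotc, ballot, Finset.mem_filter, Finset.mem_singleton]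
  split_ifs with h
  · subst h
    simp only [Finset.mem_singleton]
    constructor
    · rintro ⟨rfl, -⟩; rfl
    · rintro rfl; exact ⟨rfl, rfl⟩
  · simp only [Finset.notMem_empty, iff_false]
    rintro ⟨rfl, hc⟩
    simp at hc
    omega

lemma card_ballotc (n : ℕ) : ∀ k, ((ballotc n k).card : ℤ) =
    if n ≤ 2 * k then (n.choose k : ℤ) - n.choose (k+1) else 0 := by
  induction n with
  | zero =>
    intro k
    rw [ballotc_zero]
    rcases Nat.eq_zero_or_pos k with rfl | hk
    · simp
    · rw [if_neg (by omega), if_pos (by omega)]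
      simp [Nat.choose_eq_zero_of_lt hk]
  | succ n ih =>
    intro k
    rcases Nat.eq_zero_or_pos k with rfl | hk
    · rw [ballotc_zero_succ, if_neg (by omega)]
      simp
    · obtain ⟨k, rfl⟩ : ∃ k', k = k' + 1 := ⟨k - 1, by omega⟩
      have hdisj : Disjoint ((ballotc n k).image (· ++ [true]))
          (if n + 1 ≤ 2 * (k+1) then (ballotc n (k+1)).image (· ++ [false]) else ∅) := by
        rw [Finset.disjoint_left]
        intro x hx hx2
        obtain ⟨a, -, rfl⟩ := Finset.mem_image.mp hx
        split_ifs at hx2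
        · obtain ⟨b, -, heq⟩ := Finset.mem_image.mp hx2
          obtain ⟨-, h2⟩ := List.append_inj' heq.symm rfl
          simp at h2
        · simp at hx2
      rw [ballotc_succ, Finset.card_union_of_disjoint hdisj,
        Finset.card_image_of_injective _ (List.append_left_injective _)]
      have h1 := ih k
      have h2 := ih (k+1)
      have pasc1 : ((n+1).choose (k+1) : ℤ) = n.choose k + n.choose (k+1) := by
        exact_mod_cast (Nat.choose_succ_succ n k : _)
      have pasc2 : ((n+1).choose (k+1+1) : ℤ) = n.choose (k+1) + n.choose (k+1+1) := by
        exact_mod_cast (Nat.choose_succ_succ n (k+1) : _)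
      by_cases hif : n + 1 ≤ 2 * (k + 1)
      · rw [if_pos hif, Finset.card_image_of_injective _ (List.append_left_injective _),
          if_pos (by omega)]
        rw [if_pos (by omega)] at h2
        push_cast
        rcases Nat.lt_or_ge n (2*k+1) with hn | hn
        · rw [if_pos (by omega)] at h1
          omega
        · have hn1 : n = 2*k+1 := by omega
          rw [if_neg (by omega)] at h1
          have hsym : (n.choose k : ℤ) = n.choose (k+1) := by
            have h4 := Nat.choose_symm (n := n) (k := k+1) (by omega)
            rw [show n - (k+1) = k by omega] at h4
            exact_mod_cast h4
          omega
      · rw [if_neg hif, if_neg (by omega), Finset.card_empty]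
        rw [if_neg (by omega)] at h1
        push_cast
        omega



lemma card_ballot (n : ℕ) : (ballot n).card = n.choose (n / 2) := by
  have hfib : (ballot n).card = ∑ k ∈ Finset.range (n+1), (ballotc n k).card := by
    have := Finset.card_eq_sum_card_fiberwise (f := fun l : List Bool => l.count true)
      (s := ballot n) (t := Finset.range (n+1)) (fun l hl => by
        rw [Finset.mem_coe, Finset.mem_range]
        show l.count true < n + 1
        have h1 := List.count_le_length (a := true) (l := l)
        have h2 : l.length = n := (mem_ballot.mp hl).1
        omega)
    rw [this]
    exact Finset.sum_congr rfl (fun k _ => rfl)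
  have key : ((ballot n).card : ℤ) = n.choose (n / 2) := by
    rw [hfib]
    push_cast
    rw [Finset.sum_congr rfl (fun k _ => card_ballotc n k)]
    rw [Finset.sum_ite, Finset.sum_const, smul_zero, add_zero]
    have hfil : (Finset.range (n+1)).filter (fun k => n ≤ 2 * k) =
        Finset.Ico ((n+1)/2) (n+1) := by
      ext k
      simp only [Finset.mem_filter, Finset.mem_range, Finset.mem_Ico]
      omega
    rw [hfil, Finset.sum_Ico_eq_sum_range]
    have := Finset.sum_range_sub' (fun j => (n.choose ((n+1)/2 + j) : ℤ)) (n + 1 - (n+1)/2)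
    simp only [add_zero, ← add_assoc] at this
    rw [this, show (n+1)/2 + (n + 1 - (n+1)/2) = n + 1 by omega, Nat.choose_succ_self]
    rcases Nat.even_or_odd n with ⟨m, rfl⟩ | ⟨m, rfl⟩
    · rw [show (m+m+1)/2 = (m+m)/2 by omega]
      simp
    · rw [show (2*m+1+1)/2 = (2*m+1) - (2*m+1)/2 by omega, Nat.choose_symm (by omega)]
      simp
  exact_mod_cast key



lemma count_map_not (b : Bool) (l : List Bool) : (l.map not).count b = l.count (!b) := by
  induction l with
  | nil => simp
  | cons a t ih => cases a <;> cases b <;> simp [List.count_cons, ih]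

/-- extension -/
def ext (h : List Bool) : List Bool := h ++ (h.map not).reverse

lemma sym_ext (h : List Bool) : IsSymmetricDyckPath (ext h) := by
  unfold IsSymmetricDyckPath ext
  rw [List.reverse_append, List.reverse_reverse, List.map_append, List.map_map]
  simp [List.map_reverse, Function.comp_def]

lemma take_reverse' (x : List Bool) (t : ℕ) :
    x.reverse.take t = (x.drop (x.length - t)).reverse := by
  rcases le_or_gt t x.length with ht | ht
  · have := List.reverse_take (l := x.reverse) (i := t)
    rw [List.reverse_reverse, List.length_reverse] at this
    rw [← List.reverse_reverse (x.reverse.take t), this]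
  · rw [List.take_of_length_le (by simp; omega), Nat.sub_eq_zero_of_le ht.le, List.drop_zero]

lemma dyck_ext (s : ℕ) (h : List Bool) (hlen : h.length = s) (hbal : Bal h) :
    IsDyckPath s (ext h) := by
  have hsum := count_add h
  refine ⟨by simp [ext, hlen]; omega, ?_, ?_⟩
  · simp only [ext, List.count_append, List.count_reverse, count_map_not]
    simp; omega
  · intro k
    rcases le_or_gt k s with hk | hk
    · rw [ext, List.take_append_of_le_length (by omega)]
      exact hbal k
    · rw [ext, List.take_append, List.take_of_length_le (by omega)]
      set t := k - h.length with ht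
      rw [take_reverse']
      simp only [List.count_append, List.count_reverse, count_map_not,
        List.length_map]
      rw [← List.map_drop]
      simp only [count_map_not]
      set d := h.drop (h.length - t) with hd
      have hsplit_t : (h.take (h.length - t)).count true + d.count true = h.count true := by
        rw [← List.count_append, List.take_append_drop]
      have hsplit_f : (h.take (h.length - t)).count false + d.count false = h.count false := by
        rw [← List.count_append, List.take_append_drop]
      have hb := hbal (h.length - t)
      simp only [Bool.not_true, Bool.not_false]
      omega

lemma half_of_dyck_sym (s : ℕ) (l : List Bool) (hd : IsDyckPath s l) (hsym : IsSymmetricDyckPath l) :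
    (l.take s).length = s ∧ Bal (l.take s) ∧ ext (l.take s) = l := by
  obtain ⟨hlen, hcount, hbal⟩ := hd
  refine ⟨by simp [hlen]; omega, ?_, ?_⟩
  · intro k
    rw [List.take_take]
    exact hbal _
  · unfold ext
    have hx : l = (l.map not).reverse := by
      rw [← List.map_reverse]; exact hsym.symm
    have hdrop : l.drop s = ((l.take s).map not).reverse := by
      conv_lhs => rw [hx]
      have := List.reverse_take (l := l.map not) (i := s)
      rw [List.length_map, hlen, show 2 * s - s = s by omega] at this
      rw [← this, List.map_take]
    rw [← hdrop, List.take_append_drop]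


end SymDyck

/-- For every positive integer `s`, the number of symmetric Dyck paths of order `s`
is `C(s, ⌊s/2⌋)`. -/
theorem count_symmetric_dyck (s : ℕ) (hs : 0 < s) :
    Nat.card {l : List Bool // IsDyckPath s l ∧ IsSymmetricDyckPath l} =
      s.choose (s / 2) := by
  have e : {l : List Bool // IsDyckPath s l ∧ IsSymmetricDyckPath l} ≃
      {h // h ∈ SymDyck.ballot s} :=
    { toFun := fun x =>
        ⟨x.1.take s, SymDyck.mem_ballot.mpr
          ⟨(SymDyck.half_of_dyck_sym s x.1 x.2.1 x.2.2).1,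
           (SymDyck.half_of_dyck_sym s x.1 x.2.1 x.2.2).2.1⟩⟩
      invFun := fun h =>
        ⟨SymDyck.ext h.1,
          SymDyck.dyck_ext s h.1 (SymDyck.mem_ballot.mp h.2).1 (SymDyck.mem_ballot.mp h.2).2,
          SymDyck.sym_ext h.1⟩
      left_inv := fun x =>
        Subtype.ext (SymDyck.half_of_dyck_sym s x.1 x.2.1 x.2.2).2.2
      right_inv := fun h => by
        obtain ⟨l, hmem⟩ := h
        have hl : l.length = s := (SymDyck.mem_ballot.mp hmem).1
        apply Subtype.ext
        show (SymDyck.ext l).take s = l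
        rw [SymDyck.ext, ← hl, List.take_left] }
  rw [Nat.card_congr e, Nat.card_eq_finsetCard, SymDyck.card_ballot]
end

section
/- For every positive integer s, the number of partitions that are simultaneously s-core, (s+1)-core, and (s+2)-core equals the s-th Motzkin number M_s, the number of Motzkin paths of length s. -/
/-- A partition, given as a weakly decreasing sequence of natural numbers with
finite support.  `parts i` is the size of the `(i+1)`-st row (0-indexed). -/
structure YPartition where
  parts : ℕ → ℕ
  antitone : ∀ ⦃i j : ℕ⦄, i ≤ j → parts j ≤ parts i
  support_finite : ∃ N, ∀ i, N ≤ i → parts i = 0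

namespace YPartition

/-- The conjugate partition: `conj p j` is the number of rows having more than `j`
boxes, i.e. the length of the `(j+1)`-st column (0-indexed). -/
noncomputable def conj (p : YPartition) (j : ℕ) : ℕ :=
  Set.ncard {i : ℕ | j < p.parts i}

/-- `p.IsSelfConjugate` means the conjugate of `p` equals `p`. -/
def IsSelfConjugate (p : YPartition) : Prop :=
  ∀ j, p.conj j = p.parts j

/-- The hook length of the (0-indexed) box `(i, j)`; in 1-indexed terms this is
`λ_{i+1} + λ'_{j+1} - (i+1) - (j+1) + 1`. -/
noncomputable def hook (p : YPartition) (i j : ℕ) : ℕ :=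
  p.parts i + p.conj j - i - j - 1

/-- `p.IsCore t` means no hook length of a box of `p` is divisible by `t`. -/
def IsCore (p : YPartition) (t : ℕ) : Prop :=
  ∀ i j, j < p.parts i → ¬ (t ∣ p.hook i j)

/-- The set of main diagonal hook lengths of `p`. -/
noncomputable def MD (p : YPartition) : Set ℕ :=
  {h | ∃ i, i < p.parts i ∧ h = p.hook i i}

end YPartition

/-- A step of a Motzkin path: up `(1,1)`, flat `(1,0)`, or down `(1,-1)`. -/
inductive MStep : Type
  | up : MStep
  | flat : MStep
  | down : MStep
  deriving DecidableEq

/-- The vertical displacement of a Motzkin step. -/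
def MStep.val : MStep → ℤ
  | .up => 1
  | .flat => 0
  | .down => -1

/-- A list of steps is a Motzkin path if every prefix has nonnegative height
and the total height is `0` (i.e. it goes from `(0,0)` to `(n,0)` staying
weakly above the x-axis). -/
def IsMotzkinPath (l : List MStep) : Prop :=
  (∀ k, 0 ≤ ((l.take k).map MStep.val).sum) ∧ (l.map MStep.val).sum = 0

/-- Swapping up and down steps. -/
def MStep.swap : MStep → MStep
  | .up => .down
  | .flat => .flat
  | .down => .up

/-- A Motzkin path is symmetric if reading it backwards with up and down steps
interchanged (i.e. reflecting about the vertical line `x = n/2`) gives the same path. -/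
def IsSymmetricPath (l : List MStep) : Prop :=
  l.reverse.map MStep.swap = l

/-- `motzkin n` is the number of Motzkin paths of length `n`. -/
noncomputable def motzkin (n : ℕ) : ℕ :=
  Nat.card {l : List MStep // l.length = n ∧ IsMotzkinPath l}

/-- `symMotzkin n` is the number of symmetric Motzkin paths of length `n`. -/
noncomputable def symMotzkin (n : ℕ) : ℕ :=
  Nat.card {l : List MStep // l.length = n ∧ IsMotzkinPath l ∧ IsSymmetricPath l}

open Finset

lemma downclosed_eq_Iio (S : Set ℕ) (h : ∀ ⦃a b : ℕ⦄, a ≤ b → b ∈ S → a ∈ S)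
    (hf : S.Finite) : S = Set.Iio S.ncard := by
  rcases S.eq_empty_or_nonempty with hS | hS
  · rw [hS]; ext x; simp [Set.ncard_empty]
  · have hne : hf.toFinset.Nonempty := by simpa using hS
    set m := hf.toFinset.max' hne with hm
    have hmem : m ∈ S := by
      have := hf.toFinset.max'_mem hne
      simpa using this
    have hIio : S = Set.Iio (m + 1) := by
      ext x
      constructor
      · intro hx
        have : x ≤ m := by
          have : x ∈ hf.toFinset := by simpa using hx
          exact hf.toFinset.le_max' x this
        exact Nat.lt_succ_of_le this
      · intro hx
        exact h (Nat.lt_succ_iff.mp hx) hmem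
    have hcard : S.ncard = m + 1 := by
      rw [hIio, ← Finset.coe_range, Set.ncard_coe_finset, Finset.card_range]
    rw [hcard, hIio]

namespace YPartition

variable (p : YPartition)

lemma parts_finite (j : ℕ) : {i : ℕ | j < p.parts i}.Finite := by
  obtain ⟨N, hN⟩ := p.support_finite
  apply Set.Finite.subset (Set.finite_Iio N)
  intro i hi
  simp only [Set.mem_setOf_eq] at hi
  simp only [Set.mem_Iio]
  by_contra h
  have : p.parts i = 0 := hN i (by omega)
  omega

lemma lt_conj_iff {i j : ℕ} : i < p.conj j ↔ j < p.parts i := by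
  have h := downclosed_eq_Iio {i : ℕ | j < p.parts i}
    (fun a b hab hb => lt_of_lt_of_le hb (p.antitone hab)) (p.parts_finite j)
  have := Set.ext_iff.mp h i
  simp only [Set.mem_setOf_eq, Set.mem_Iio] at this
  exact ⟨fun hh => this.mpr hh, fun hh => this.mp hh⟩

/-- number of (nonzero) rows -/
noncomputable def rows : ℕ := p.conj 0

lemma lt_rows_iff {i : ℕ} : i < p.rows ↔ 0 < p.parts i := p.lt_conj_iff

lemma conj_le_rows (j : ℕ) : p.conj j ≤ p.rows := by
  by_contra h
  push_neg at h
  have h1 : 0 < p.parts p.rows := by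
    have := p.lt_conj_iff.mp h
    omega
  have := p.lt_rows_iff.mpr h1
  omega

/-- first-column hook lengths (beta numbers) -/
noncomputable def beta (i : ℕ) : ℕ := p.parts i + p.rows - i - 1

lemma beta_spec {i : ℕ} (hi : i < p.rows) : p.beta i + i + 1 = p.parts i + p.rows := by
  unfold beta; omega

lemma hook_zero (i : ℕ) : p.hook i 0 = p.beta i := by
  simp [hook, beta, rows]

/-- the beta-set -/
noncomputable def bset : Finset ℕ := (Finset.range p.rows).image p.beta

lemma beta_mem (hi : i < p.rows) : p.beta i ∈ p.bset :=
  mem_image.mpr ⟨i, mem_range.mpr hi, rfl⟩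

lemma bset_pos {b : ℕ} (hb : b ∈ p.bset) : 0 < b := by
  obtain ⟨i, hi, rfl⟩ := mem_image.mp hb
  rw [mem_range] at hi
  have h1 : 0 < p.parts i := p.lt_rows_iff.mp hi
  have := p.beta_spec hi
  omega

/-- complement enumeration -/
noncomputable def gamma (j : ℕ) : ℕ := j + (p.rows - p.conj j)

lemma gamma_spec (j : ℕ) : p.gamma j + p.conj j = j + p.rows := by
  have := p.conj_le_rows j
  unfold gamma; omega

lemma gamma_zero : p.gamma 0 = 0 := by
  unfold gamma rows; omega

lemma conj_anti {j k : ℕ} (h : j ≤ k) : p.conj k ≤ p.conj j := by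
  by_contra hc
  push_neg at hc
  have h1 : k < p.parts (p.conj j) := p.lt_conj_iff.mp hc
  have h2 : ¬ (j < p.parts (p.conj j)) := by
    intro hcc
    have := p.lt_conj_iff.mpr hcc
    omega
  omega

lemma gamma_step (j : ℕ) : p.gamma j + 1 ≤ p.gamma (j + 1) := by
  have h1 := p.gamma_spec j
  have h2 := p.gamma_spec (j+1)
  have h3 := p.conj_anti (Nat.le_add_right j 1)
  omega

lemma le_gamma (j : ℕ) : j ≤ p.gamma j := by unfold gamma; omega

lemma gamma_lt_beta {i j : ℕ} (hi : i < p.rows) (hj : j < p.parts i) :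
    p.gamma j < p.beta i := by
  have h1 := p.beta_spec hi
  have h2 := p.gamma_spec j
  have h3 : i < p.conj j := p.lt_conj_iff.mpr hj
  omega

lemma beta_lt_gamma {i j : ℕ} (hi : i < p.rows) (hj : p.parts i ≤ j) :
    p.beta i < p.gamma j := by
  have h1 := p.beta_spec hi
  have h2 := p.gamma_spec j
  have h3 : p.conj j ≤ i := by
    by_contra hc
    push_neg at hc
    have := p.lt_conj_iff.mp hc
    omega
  omega

lemma gamma_not_mem (j : ℕ) : p.gamma j ∉ p.bset := by
  intro hmem
  obtain ⟨i, hi, hbi⟩ := mem_image.mp hmem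
  rw [mem_range] at hi
  rcases lt_or_ge j (p.parts i) with h | h
  · have := p.gamma_lt_beta hi h; omega
  · have := p.beta_lt_gamma hi h; omega

lemma mem_of_gamma_lt {c j : ℕ} (hc1 : p.gamma j < c) (hc2 : c < p.gamma (j + 1)) :
    c ∈ p.bset := by
  have h1 := p.gamma_spec j
  have h2 := p.gamma_spec (j+1)
  set i := j + p.rows - c with hidef
  have hic : i + c = j + p.rows := by
    have := p.conj_le_rows (j+1)
    omega
  have hilt : i < p.conj j := by omega
  have hige : p.conj (j+1) ≤ i := by omega
  have hpi1 : j < p.parts i := p.lt_conj_iff.mp hilt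
  have hpi2 : ¬ (j + 1 < p.parts i) := by
    intro hcc
    have := p.lt_conj_iff.mpr hcc
    omega
  have hirows : i < p.rows := by
    have := p.conj_le_rows j
    omega
  have hb := p.beta_spec hirows
  have : p.beta i = c := by omega
  rw [← this]
  exact p.beta_mem hirows

lemma exists_gamma_eq {c : ℕ} (hc : c ∉ p.bset) : ∃ j, p.gamma j = c := by
  have h0 : p.gamma 0 ≤ c := by rw [p.gamma_zero]; exact Nat.zero_le c
  set j := Nat.findGreatest (fun j => p.gamma j ≤ c) c with hj
  have hspec : p.gamma j ≤ c :=
    Nat.findGreatest_spec (P := fun j => p.gamma j ≤ c) (Nat.zero_le c) h0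
  rcases Nat.lt_or_ge c (j + 1) with h | h
  · -- j = c hence gamma j = c
    have : j ≤ c := Nat.findGreatest_le c
    have hle := p.le_gamma j
    exact ⟨j, by omega⟩
  · have hng := Nat.findGreatest_is_greatest (P := fun j => p.gamma j ≤ c) (n := c)
      (k := j + 1) (Nat.lt_succ_self j) h
    rw [not_le] at hng
    rcases eq_or_lt_of_le hspec with heq | hlt
    · exact ⟨j, heq⟩
    · exact absurd (p.mem_of_gamma_lt hlt hng) hc

lemma hook_gamma {i j : ℕ} (hij : j < p.parts i) :
    p.hook i j + p.gamma j = p.beta i := by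
  have h3 : i < p.conj j := p.lt_conj_iff.mpr hij
  have hir : i < p.rows := by have := p.conj_le_rows j; omega
  have h1 := p.beta_spec hir
  have h2 := p.gamma_spec j
  unfold hook
  omega

lemma closed_of_isCore {t : ℕ} (ht : 0 < t) (h : p.IsCore t) :
    ∀ b ∈ p.bset, t ≤ b → b - t ∈ p.bset := by
  intro b hb htb
  by_contra hnb
  obtain ⟨j, hj⟩ := p.exists_gamma_eq hnb
  obtain ⟨i, hi, hbi⟩ := mem_image.mp hb
  rw [mem_range] at hi
  have hjp : j < p.parts i := by
    by_contra hc
    push_neg at hc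
    have := p.beta_lt_gamma hi hc
    omega
  have hk := p.hook_gamma hjp
  have hht : p.hook i j = t := by omega
  exact h i j hjp (by rw [hht])

lemma isCore_of_closed {t : ℕ} (ht : 0 < t)
    (h : ∀ b ∈ p.bset, t ≤ b → b - t ∈ p.bset) : p.IsCore t := by
  intro i j hij hdvd
  have h3 : i < p.conj j := p.lt_conj_iff.mpr hij
  have hir : i < p.rows := by have := p.conj_le_rows j; omega
  have hq := p.hook_gamma hij
  have hpos : 0 < p.hook i j := by
    have := p.gamma_lt_beta hir hij
    omega
  obtain ⟨k, hk⟩ := hdvd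
  have hk1 : k ≠ 0 := by rintro rfl; simp at hk; omega
  have main : ∀ k, ∀ b ∈ p.bset, b = p.gamma j + t * k + t → False := by
    intro k
    induction k with
    | zero =>
      intro b hb hbe
      have h2 := h b hb (by omega)
      have heq : b - t = p.gamma j := by omega
      exact p.gamma_not_mem j (heq ▸ h2)
    | succ n ih =>
      intro b hb hbe
      have hmul : t * (n + 1) = t * n + t := by ring
      have h2 := h b hb (by omega)
      exact ih (b - t) h2 (by omega)
  obtain ⟨m, rfl⟩ : ∃ m, k = m + 1 := ⟨k - 1, by omega⟩
  have hmul : t * (m + 1) = t * m + t := by ring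
  exact main m (p.beta i) (p.beta_mem hir) (by omega)

lemma strictanti_image_unique :
    ∀ (r : ℕ) (f g : ℕ → ℕ), (∀ i j, i < j → j < r → f j < f i) →
      (∀ i j, i < j → j < r → g j < g i) →
      (Finset.range r).image f = (Finset.range r).image g →
      ∀ i, i < r → f i = g i := by
  intro r
  induction r with
  | zero => intro f g _ _ _ i hi; omega
  | succ n ih =>
    intro f g hf hg himg i hi
    have hfn_min : ∀ j, j < n + 1 → f n ≤ f j := by
      intro j hj
      rcases Nat.lt_or_ge j n with h | h
      · exact le_of_lt (hf j n h (Nat.lt_succ_self n))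
      · have : j = n := by omega
        rw [this]
    have hgn_min : ∀ j, j < n + 1 → g n ≤ g j := by
      intro j hj
      rcases Nat.lt_or_ge j n with h | h
      · exact le_of_lt (hg j n h (Nat.lt_succ_self n))
      · have : j = n := by omega
        rw [this]
    have hmemf : f n ∈ (Finset.range (n+1)).image g := by
      rw [← himg]
      exact Finset.mem_image.mpr ⟨n, Finset.mem_range.mpr (Nat.lt_succ_self n), rfl⟩
    obtain ⟨j, hj, hgj⟩ := Finset.mem_image.mp hmemf
    rw [Finset.mem_range] at hj
    have hmemg : g n ∈ (Finset.range (n+1)).image f := by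
      rw [himg]
      exact Finset.mem_image.mpr ⟨n, Finset.mem_range.mpr (Nat.lt_succ_self n), rfl⟩
    obtain ⟨j', hj', hfj'⟩ := Finset.mem_image.mp hmemg
    rw [Finset.mem_range] at hj'
    have heqn : f n = g n := by
      have h1 : g n ≤ g j := hgn_min j hj
      have h2 : f n ≤ f j' := hfn_min j' hj'
      omega
    rcases Nat.lt_or_ge i n with hin | hin
    · have e1 : (Finset.range (n+1)).image f = insert (f n) ((Finset.range n).image f) := by
        rw [Finset.range_add_one, Finset.image_insert]
      have e2 : (Finset.range (n+1)).image g = insert (g n) ((Finset.range n).image g) := by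
        rw [Finset.range_add_one, Finset.image_insert]
      have hnotf : f n ∉ (Finset.range n).image f := by
        intro hmem
        obtain ⟨a, ha, hae⟩ := Finset.mem_image.mp hmem
        rw [Finset.mem_range] at ha
        have := hf a n ha (Nat.lt_succ_self n)
        omega
      have hnotg : g n ∉ (Finset.range n).image g := by
        intro hmem
        obtain ⟨a, ha, hae⟩ := Finset.mem_image.mp hmem
        rw [Finset.mem_range] at ha
        have := hg a n ha (Nat.lt_succ_self n)
        omega
      have hins : insert (f n) ((Finset.range n).image f)
          = insert (f n) ((Finset.range n).image g) := by
        rw [← e1, himg, e2, heqn]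
      have himg' : (Finset.range n).image f = (Finset.range n).image g := by
        have h1 : ((insert (f n) ((Finset.range n).image f)).erase (f n))
            = (Finset.range n).image f := Finset.erase_insert hnotf
        have h2 : ((insert (f n) ((Finset.range n).image g)).erase (f n))
            = (Finset.range n).image g := by
          rw [heqn]; exact Finset.erase_insert hnotg
        rw [← h1, ← h2, hins]
      exact ih f g (fun a b hab hb => hf a b hab (by omega))
        (fun a b hab hb => hg a b hab (by omega)) himg' i hin
    · have : i = n := by omega
      rw [this, heqn]


lemma beta_strictAnti (p : YPartition) {i i' : ℕ} (hi' : i' < p.rows) (h : i < i') :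
    p.beta i' < p.beta i := by
  have h1 := p.beta_spec hi'
  have h2 := p.beta_spec (lt_trans h hi')
  have h3 := p.antitone (le_of_lt h)
  omega

lemma card_bset (p : YPartition) : p.bset.card = p.rows := by
  rw [bset, Finset.card_image_of_injOn, Finset.card_range]
  intro a ha b hb hab
  simp only [Finset.coe_range, Set.mem_Iio] at ha hb
  by_contra hne
  rcases Nat.lt_or_ge a b with h | h
  · have := p.beta_strictAnti hb h; omega
  · have hba : b < a := by omega
    have := p.beta_strictAnti ha hba; omega

lemma ext' {p q : YPartition} (h : ∀ i, p.parts i = q.parts i) : p = q := by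
  cases p; cases q
  simp only [mk.injEq]
  exact funext h

lemma eq_of_bset_eq {p q : YPartition} (h : p.bset = q.bset) : p = q := by
  have hrows : p.rows = q.rows := by rw [← p.card_bset, ← q.card_bset, h]
  apply ext'
  intro i
  rcases Nat.lt_or_ge i p.rows with hi | hi
  · have himg : (Finset.range p.rows).image p.beta = (Finset.range p.rows).image q.beta := by
      conv_rhs => rw [hrows]
      exact h
    have hb := strictanti_image_unique p.rows p.beta q.beta
      (fun a b hab hb => p.beta_strictAnti hb hab)
      (fun a b hab hb => q.beta_strictAnti (by omega) hab)
      himg i hi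
    have h1 := p.beta_spec hi
    have h2 := q.beta_spec (show i < q.rows by omega)
    omega
  · have h1 : p.parts i = 0 := by
      by_contra hc
      have h3 : i < p.rows := p.lt_rows_iff.mpr (by omega)
      omega
    have h2 : q.parts i = 0 := by
      by_contra hc
      have h3 : i < q.rows := q.lt_rows_iff.mpr (by omega)
      omega
    omega

/-- ascending enumeration of a finset of naturals, as a plain ℕ function -/
noncomputable def emb (B : Finset ℕ) (k : ℕ) : ℕ :=
  if h : k < B.card then B.orderEmbOfFin rfl ⟨k, h⟩ else 0

lemma emb_lt {B : Finset ℕ} {i j : ℕ} (hij : i < j) (hj : j < B.card) :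
    emb B i < emb B j := by
  unfold emb
  rw [dif_pos (show i < B.card by omega), dif_pos hj]
  exact (B.orderEmbOfFin rfl).strictMono (show (⟨i, by omega⟩ : Fin B.card) < ⟨j, hj⟩ by
    rw [Fin.mk_lt_mk]; exact hij)

lemma emb_mem {B : Finset ℕ} {k : ℕ} (hk : k < B.card) : emb B k ∈ B := by
  unfold emb
  rw [dif_pos hk]
  exact B.orderEmbOfFin_mem rfl _

lemma emb_surj {B : Finset ℕ} {b : ℕ} (hb : b ∈ B) : ∃ k, k < B.card ∧ emb B k = b := by
  have hrange := B.range_orderEmbOfFin rfl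
  have hmem : b ∈ Set.range (B.orderEmbOfFin rfl) := by rw [hrange]; exact hb
  obtain ⟨k, hk⟩ := hmem
  refine ⟨k, k.2, ?_⟩
  unfold emb
  rw [dif_pos k.2, ← hk]

lemma emb_gap (B : Finset ℕ) : ∀ d k, k + d < B.card → emb B k + d ≤ emb B (k + d) := by
  intro d
  induction d with
  | zero => intro k h; simp
  | succ n ih =>
    intro k h
    have h1 := ih k (by omega)
    have h2 : emb B (k + n) < emb B (k + n + 1) := emb_lt (by omega) (by omega)
    show emb B k + (n + 1) ≤ emb B (k + n + 1)
    omega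

lemma emb_ge {B : Finset ℕ} (hpos : ∀ b ∈ B, 0 < b) {k : ℕ} (hk : k < B.card) :
    k + 1 ≤ emb B k := by
  have h1 := emb_gap B k 0 (by omega)
  have h0 : (0 : ℕ) + k = k := by omega
  rw [h0] at h1
  have h2 := hpos _ (emb_mem (show 0 < B.card by omega))
  omega

/-- the partition with a given beta-set -/
noncomputable def ofBset (B : Finset ℕ) : YPartition where
  parts i := if i < B.card then emb B (B.card - 1 - i) - (B.card - 1 - i) else 0
  antitone := by
    intro i j hij
    by_cases hj : j < B.card
    · have hi : i < B.card := by omega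
      rw [if_pos hi, if_pos hj]
      rcases Nat.eq_or_lt_of_le hij with rfl | hlt
      · omega
      · have hgap := emb_gap B (j - i) (B.card - 1 - j) (by omega)
        have hidx : B.card - 1 - j + (j - i) = B.card - 1 - i := by omega
        rw [hidx] at hgap
        omega
    · rw [if_neg hj]
      exact Nat.zero_le _
  support_finite := ⟨B.card, fun i hi => if_neg (by omega)⟩

lemma parts_ofBset {B : Finset ℕ} {i : ℕ} (hi : i < B.card) :
    (ofBset B).parts i = emb B (B.card - 1 - i) - (B.card - 1 - i) := by
  show (if i < B.card then _ else 0) = _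
  rw [if_pos hi]

lemma parts_ofBset_pos {B : Finset ℕ} (hpos : ∀ b ∈ B, 0 < b) {i : ℕ} (hi : i < B.card) :
    0 < (ofBset B).parts i := by
  rw [parts_ofBset hi]
  have := emb_ge hpos (show B.card - 1 - i < B.card by omega)
  omega

lemma rows_ofBset {B : Finset ℕ} (hpos : ∀ b ∈ B, 0 < b) : (ofBset B).rows = B.card := by
  have h2 : ∀ i, B.card ≤ i → (ofBset B).parts i = 0 := fun i hi => if_neg (by omega)
  rcases lt_trichotomy ((ofBset B).rows) B.card with h | h | h
  · have h1 := parts_ofBset_pos hpos h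
    have h3 : (ofBset B).rows < (ofBset B).rows := (ofBset B).lt_rows_iff.mpr h1
    omega
  · exact h
  · have h1 : 0 < (ofBset B).parts B.card := (ofBset B).lt_rows_iff.mp h
    rw [h2 B.card le_rfl] at h1
    omega

lemma bset_ofBset {B : Finset ℕ} (hpos : ∀ b ∈ B, 0 < b) : (ofBset B).bset = B := by
  have hrows := rows_ofBset hpos
  ext b
  constructor
  · intro hb
    obtain ⟨i, hi, rfl⟩ := Finset.mem_image.mp hb
    rw [Finset.mem_range] at hi
    have hic : i < B.card := by omega
    have hspec := (ofBset B).beta_spec hi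
    have hp1 := parts_ofBset hic
    have hge := emb_ge hpos (show B.card - 1 - i < B.card by omega)
    have hbeta : (ofBset B).beta i = emb B (B.card - 1 - i) := by omega
    rw [hbeta]
    exact emb_mem (by omega)
  · intro hb
    obtain ⟨k, hk, hkb⟩ := emb_surj hb
    have hic : B.card - 1 - k < B.card := by omega
    have hi : B.card - 1 - k < (ofBset B).rows := by omega
    have hspec := (ofBset B).beta_spec hi
    have hp1 := parts_ofBset hic
    have hemb : emb B (B.card - 1 - (B.card - 1 - k)) = emb B k := by
      congr 1
      omega
    rw [hemb] at hp1
    have hge := emb_ge hpos hk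
    have hbeta : (ofBset B).beta (B.card - 1 - k) = b := by omega
    rw [← hbeta]
    exact (ofBset B).beta_mem hi

end YPartition

/-! ### Part B: closed beta-sets and Motzkin paths -/

def BClosed (s : ℕ) (B : Finset ℕ) : Prop :=
  (∀ b ∈ B, 0 < b) ∧
  (∀ b ∈ B, s ≤ b → b - s ∈ B) ∧
  (∀ b ∈ B, s + 1 ≤ b → b - (s + 1) ∈ B) ∧
  (∀ b ∈ B, s + 2 ≤ b → b - (s + 2) ∈ B)

lemma e_div {s : ℕ} (q : ℕ) {x : ℕ} (hx : x < s + 1) : (q * (s+1) + x) / (s+1) = q := by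
  rw [Nat.add_comm, Nat.mul_comm, Nat.add_mul_div_left _ _ (show 0 < s+1 by omega),
    Nat.div_eq_of_lt hx, Nat.zero_add]

lemma e_mod {s : ℕ} (q : ℕ) {x : ℕ} (hx : x < s + 1) : (q * (s+1) + x) % (s+1) = x := by
  rw [Nat.add_comm, Nat.mul_comm, Nat.add_mul_mod_self_left, Nat.mod_eq_of_lt hx]

lemma e_unique {s q x q' x' : ℕ} (hx : x < s + 1) (hx' : x' < s + 1)
    (h : q * (s+1) + x = q' * (s+1) + x') : q = q' ∧ x = x' := by
  have h1 := e_div (s := s) q hx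
  have h2 := e_div (s := s) q' hx'
  have h3 := e_mod (s := s) q hx
  have h4 := e_mod (s := s) q' hx'
  rw [h] at h1 h3
  omega

lemma mul_pred {q s : ℕ} (h : 1 ≤ q) : q * (s+1) = (q-1) * (s+1) + (s+1) := by
  obtain ⟨m, rfl⟩ : ∃ m, q = m + 1 := ⟨q - 1, by omega⟩
  rw [Nat.add_sub_cancel, Nat.succ_mul]

lemma one_le_mul_e {q s : ℕ} (h : 1 ≤ q) : s + 1 ≤ q * (s+1) := by
  calc s + 1 = 1 * (s+1) := (Nat.one_mul _).symm
  _ ≤ q * (s+1) := Nat.mul_le_mul_right _ h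

lemma bclosed_coords {s : ℕ} {B : Finset ℕ} (hB : BClosed s B) :
    ∀ b ∈ B, ∃ q x, b = q * (s+1) + x ∧ q + 1 ≤ x ∧ q + x + 1 ≤ s := by
  obtain ⟨hpos, hcs, hcs1, hcs2⟩ := hB
  intro b
  induction b using Nat.strong_induction_on with
  | _ b ih =>
    intro hb
    obtain ⟨q, x, hdm, hxlt⟩ : ∃ q x, b = q * (s+1) + x ∧ x < s + 1 :=
      ⟨b / (s+1), b % (s+1), by rw [Nat.mul_comm]; exact (Nat.div_add_mod b (s+1)).symm,
        Nat.mod_lt _ (by omega)⟩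
    have hbpos : 0 < b := hpos b hb
    rcases Nat.eq_zero_or_pos q with hq0 | hq1
    · subst hq0
      have hxs : x < s := by
        rcases Nat.lt_or_ge x s with h | h
        · exact h
        · exfalso
          have h1 := hcs b hb (by omega)
          have := hpos _ h1
          omega
      exact ⟨0, x, by omega, by omega, by omega⟩
    · have hmul := mul_pred (s := s) hq1
      have hb1 := one_le_mul_e (s := s) hq1
      rcases Nat.eq_zero_or_pos x with hx0 | hx1
      · -- x = 0 : impossible
        exfalso
        have h1 := hcs1 b hb (by omega)
        have hpos' := hpos _ h1
        obtain ⟨q'', x'', he, hc1, hc2⟩ := ih (b - (s+1)) (by omega) h1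
        obtain ⟨hq, hx⟩ := e_unique (s := s) (show x'' < s + 1 by omega)
          (show (0:ℕ) < s + 1 by omega) (show q'' * (s+1) + x'' = (q-1) * (s+1) + 0 by omega)
        omega
      · have hxs : x < s := by
          rcases Nat.lt_or_ge x s with h | h
          · exact h
          · exfalso
            have h1 := hcs b hb (by omega)
            obtain ⟨q1, x1, he1, hc11, hc12⟩ := ih (b - s) (by omega) h1
            obtain ⟨hq, hx⟩ := e_unique (s := s) (show x1 < s + 1 by omega)
              (show (0:ℕ) < s + 1 by omega) (show q1 * (s+1) + x1 = q * (s+1) + 0 by omega)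
            omega
        -- bound q + x + 1 ≤ s via b - s
        have h1 := hcs b hb (by omega)
        obtain ⟨q1, x1, he1, hc11, hc12⟩ := ih (b - s) (by omega) h1
        obtain ⟨hq1e, hx1e⟩ := e_unique (s := s) (show x1 < s + 1 by omega)
          (show x + 1 < s + 1 by omega)
          (show q1 * (s+1) + x1 = (q-1) * (s+1) + (x+1) by omega)
        -- bound q + 1 ≤ x via b - (s+2)
        have h2 := hcs2 b hb (by omega)
        have hpos2 := hpos _ h2
        obtain ⟨q2, x2, he2, hc21, hc22⟩ := ih (b - (s+2)) (by omega) h2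
        obtain ⟨hq2e, hx2e⟩ := e_unique (s := s) (show x2 < s + 1 by omega)
          (show x - 1 < s + 1 by omega)
          (show q2 * (s+1) + x2 = (q-1) * (s+1) + (x-1) by omega)
        exact ⟨q, x, hdm, by omega, by omega⟩

noncomputable def gfun (s : ℕ) (B : Finset ℕ) (x : ℕ) : ℕ :=
  ((Finset.range s).filter (fun q => q * (s+1) + x ∈ B)).card

lemma desc_closed {P : ℕ → Prop} (hstep : ∀ q, P (q+1) → P q) : ∀ d a, P (a + d) → P a := by
  intro d
  induction d with
  | zero => intro a h; exact h
  | succ n ih => intro a h; exact ih a (hstep (a+n) h)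

lemma filter_range_eq {n : ℕ} (P : ℕ → Prop) [DecidablePred P]
    (hdc : ∀ a b, a ≤ b → P b → P a) :
    (Finset.range n).filter P = Finset.range (((Finset.range n).filter P).card) := by
  set A := (Finset.range n).filter P with hA
  have hdcA : ∀ ⦃a b : ℕ⦄, a ≤ b → b ∈ (↑A : Set ℕ) → a ∈ (↑A : Set ℕ) := by
    intro a b hab hb
    rw [Finset.mem_coe, hA, Finset.mem_filter, Finset.mem_range] at hb ⊢
    exact ⟨by omega, hdc a b hab hb.2⟩
  have hset := downclosed_eq_Iio (↑A) hdcA A.finite_toSet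
  rw [Set.ncard_coe_finset] at hset
  apply Finset.coe_injective
  rw [hset, Finset.coe_range]

lemma bclosed_mem_bounds {s : ℕ} {B : Finset ℕ} (hB : BClosed s B) {q x : ℕ} (hx : x ≤ s)
    (hmem : q * (s+1) + x ∈ B) : q + 1 ≤ x ∧ q + x + 1 ≤ s := by
  obtain ⟨q', x', he, h1, h2⟩ := bclosed_coords hB _ hmem
  obtain ⟨hq, hxx⟩ := e_unique (s := s) (show x < s + 1 by omega) (show x' < s + 1 by omega) he
  omega

lemma bclosed_prefix {s : ℕ} {B : Finset ℕ} (hB : BClosed s B) {x : ℕ} :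
    ∀ q, (q + 1) * (s+1) + x ∈ B → q * (s+1) + x ∈ B := by
  intro q hmem
  have hmul : (q + 1) * (s+1) = q * (s+1) + (s+1) := Nat.succ_mul q (s+1)
  have h1 := hB.2.2.1 _ hmem (by omega)
  have : (q+1) * (s+1) + x - (s+1) = q * (s+1) + x := by omega
  rwa [this] at h1

lemma mem_iff_lt_gfun {s : ℕ} {B : Finset ℕ} (hB : BClosed s B) {q x : ℕ} (hx : x ≤ s) :
    (q * (s+1) + x ∈ B) ↔ q < gfun s B x := by
  have hfe := filter_range_eq (n := s) (fun q => q * (s+1) + x ∈ B)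
    (by
      intro a b hab hPb
      obtain ⟨d, rfl⟩ : ∃ d, b = a + d := ⟨b - a, by omega⟩
      exact desc_closed (fun q h => bclosed_prefix hB q h) d a hPb)
  constructor
  · intro hmem
    have hbd := bclosed_mem_bounds hB hx hmem
    have hqn : q ∈ (Finset.range s).filter (fun q => q * (s+1) + x ∈ B) := by
      rw [Finset.mem_filter, Finset.mem_range]
      exact ⟨by omega, hmem⟩
    rw [hfe, Finset.mem_range] at hqn
    exact hqn
  · intro hlt
    have hqn : q ∈ (Finset.range s).filter (fun q => q * (s+1) + x ∈ B) := by
      rw [hfe, Finset.mem_range]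
      exact hlt
    exact (Finset.mem_filter.mp hqn).2

lemma gfun_zero {s : ℕ} {B : Finset ℕ} (hB : BClosed s B) : gfun s B 0 = 0 := by
  by_contra h
  have h0 : 0 < gfun s B 0 := by omega
  have hmem := (mem_iff_lt_gfun hB (show 0 ≤ s by omega)).mpr h0
  have := bclosed_mem_bounds hB (show 0 ≤ s by omega) hmem
  omega

lemma gfun_s {s : ℕ} {B : Finset ℕ} (hB : BClosed s B) : gfun s B s = 0 := by
  by_contra h
  have h0 : 0 < gfun s B s := by omega
  have hmem := (mem_iff_lt_gfun hB (show s ≤ s by omega)).mpr h0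
  have := bclosed_mem_bounds hB (show s ≤ s by omega) hmem
  omega

lemma gfun_step {s : ℕ} {B : Finset ℕ} (hB : BClosed s B) {x : ℕ} (hx : x < s) :
    gfun s B (x+1) ≤ gfun s B x + 1 ∧ gfun s B x ≤ gfun s B (x+1) + 1 := by
  constructor
  · rcases Nat.lt_or_ge (gfun s B (x+1)) 2 with h | h
    · omega
    · set q := gfun s B (x+1) - 1 with hq
      have hq1 : 1 ≤ q := by omega
      have hmem : q * (s+1) + (x+1) ∈ B :=
        (mem_iff_lt_gfun hB (show x + 1 ≤ s by omega)).mpr (by omega)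
      have hmul := mul_pred (s := s) hq1
      have hge := one_le_mul_e (s := s) hq1
      have h2 := hB.2.2.2 _ hmem (by omega)
      have heq : q * (s+1) + (x+1) - (s+2) = (q-1) * (s+1) + x := by omega
      rw [heq] at h2
      have := (mem_iff_lt_gfun hB (show x ≤ s by omega)).mp h2
      omega
  · rcases Nat.lt_or_ge (gfun s B x) 2 with h | h
    · omega
    · set q := gfun s B x - 1 with hq
      have hq1 : 1 ≤ q := by omega
      have hmem : q * (s+1) + x ∈ B :=
        (mem_iff_lt_gfun hB (show x ≤ s by omega)).mpr (by omega)
      have hmul := mul_pred (s := s) hq1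
      have hge := one_le_mul_e (s := s) hq1
      have h2 := hB.2.1 _ hmem (by omega)
      have heq : q * (s+1) + x - s = (q-1) * (s+1) + (x+1) := by omega
      rw [heq] at h2
      have := (mem_iff_lt_gfun hB (show x + 1 ≤ s by omega)).mp h2
      omega

/-! ### steps and height functions -/

def stepOf (a b : ℕ) : MStep := if b = a + 1 then .up else if b = a then .flat else .down

lemma val_stepOf {a b : ℕ} (h1 : b ≤ a + 1) (h2 : a ≤ b + 1) :
    (stepOf a b).val = (b : ℤ) - (a : ℤ) := by
  unfold stepOf
  split_ifs with hb1 hb2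
  · subst hb1; show (1 : ℤ) = _; push_cast; ring
  · subst hb2; show (0 : ℤ) = _; ring
  · have hba : a = b + 1 := by omega
    subst hba; show (-1 : ℤ) = _; push_cast; ring

def theta (s : ℕ) (g : ℕ → ℕ) : List MStep :=
  (List.range s).map (fun k => stepOf (g k) (g (k+1)))

lemma theta_length (s : ℕ) (g : ℕ → ℕ) : (theta s g).length = s := by
  simp [theta]

lemma theta_take {s : ℕ} (g : ℕ → ℕ) {m : ℕ} (hm : m ≤ s) :
    (theta s g).take m = (List.range m).map (fun k => stepOf (g k) (g (k+1))) := by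
  unfold theta
  rw [← List.map_take, List.take_range, Nat.min_eq_left hm]

lemma theta_heights {s : ℕ} {g : ℕ → ℕ} (hg0 : g 0 = 0)
    (hstep : ∀ k, k < s → (g (k+1) ≤ g k + 1 ∧ g k ≤ g (k+1) + 1)) :
    ∀ k, k ≤ s → (((theta s g).take k).map MStep.val).sum = (g k : ℤ) := by
  intro k
  induction k with
  | zero => intro _; simp [hg0]
  | succ n ih =>
    intro hns
    have hn := ih (by omega)
    rw [theta_take g (show n ≤ s by omega)] at hn
    rw [theta_take g hns, List.range_succ, List.map_append, List.map_append, List.sum_append, hn]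
    have hv := val_stepOf (hstep n (by omega)).1 (hstep n (by omega)).2
    simp only [List.map_cons, List.map_nil, List.sum_cons, List.sum_nil, hv]
    push_cast
    ring

lemma theta_motzkin {s : ℕ} {g : ℕ → ℕ} (hg0 : g 0 = 0) (hgs : g s = 0)
    (hstep : ∀ k, k < s → (g (k+1) ≤ g k + 1 ∧ g k ≤ g (k+1) + 1)) :
    IsMotzkinPath (theta s g) := by
  have hh := theta_heights hg0 hstep
  have htot : ((theta s g).map MStep.val).sum = 0 := by
    have := hh s le_rfl
    rw [List.take_of_length_le (le_of_eq (theta_length s g))] at this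
    rw [this, hgs]
    rfl
  constructor
  · intro k
    rcases le_or_gt k s with h | h
    · rw [hh k h]
      exact Int.ofNat_nonneg _
    · rw [List.take_of_length_le (by rw [theta_length]; omega)]
      rw [htot]
  · exact htot

/-- heights of a list of steps -/
def hts (l : List MStep) (k : ℕ) : ℕ := (((l.take k).map MStep.val).sum).toNat

lemma hts_zero (l : List MStep) : hts l 0 = 0 := by simp [hts]

lemma val_bounds (m : MStep) : m.val ≤ 1 ∧ -1 ≤ m.val := by
  cases m <;> simp [MStep.val]

lemma sum_take_succ_steps (l : List MStep) (k : ℕ) (hk : k < l.length) :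
    ((l.take (k+1)).map MStep.val).sum
      = ((l.take k).map MStep.val).sum + (l.get ⟨k, hk⟩).val := by
  rw [List.map_take, List.map_take, List.sum_take_succ (l.map MStep.val) k (by simp [hk])]
  congr 1
  simp

lemma hts_spec {l : List MStep} (hl : IsMotzkinPath l) (k : ℕ) :
    (((l.take k).map MStep.val).sum) = (hts l k : ℤ) := by
  have := hl.1 k
  unfold hts
  omega

lemma hts_step {l : List MStep} (hl : IsMotzkinPath l) {k : ℕ} (hk : k < l.length) :
    (hts l (k+1) : ℤ) = (hts l k : ℤ) + (l.get ⟨k, hk⟩).val := by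
  rw [← hts_spec hl, ← hts_spec hl, sum_take_succ_steps l k hk]

lemma hts_step_bounds {l : List MStep} (hl : IsMotzkinPath l) {k : ℕ} (hk : k < l.length) :
    hts l (k+1) ≤ hts l k + 1 ∧ hts l k ≤ hts l (k+1) + 1 := by
  have h1 := hts_step hl hk
  have h2 := val_bounds (l.get ⟨k, hk⟩)
  omega

lemma hts_length {l : List MStep} (hl : IsMotzkinPath l) {k : ℕ} (hk : l.length ≤ k) :
    hts l k = 0 := by
  unfold hts
  rw [List.take_of_length_le hk, hl.2]
  rfl

/-- reconstruction: the path built from the heights of `l` is `l` itself -/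
lemma theta_hts {l : List MStep} (hl : IsMotzkinPath l) {s : ℕ} (hlen : l.length = s) :
    theta s (hts l) = l := by
  apply List.ext_getElem (by rw [theta_length, hlen])
  intro k h1 h2
  rw [theta_length] at h1
  have hkl : k < l.length := by omega
  rw [show (theta s (hts l))[k]'(by rw [theta_length]; exact h1) = stepOf (hts l k) (hts l (k+1)) by simp [theta]]
  have hstep := hts_step hl hkl
  have hnn1 : (0 : ℤ) ≤ ((l.take k).map MStep.val).sum := hl.1 k
  have hnn2 : (0 : ℤ) ≤ ((l.take (k+1)).map MStep.val).sum := hl.1 (k+1)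
  have hs1 := hts_spec hl k
  have hs2 := hts_spec hl (k+1)
  have hget : l.get ⟨k, hkl⟩ = l[k] := rfl
  rcases hcase : l[k] with _ | _ | _
  · -- up
    have hv : (l.get ⟨k, hkl⟩).val = 1 := by rw [hget, hcase]; rfl
    have : hts l (k+1) = hts l k + 1 := by omega
    rw [this]
    unfold stepOf
    rw [if_pos rfl]
  · -- flat
    have hv : (l.get ⟨k, hkl⟩).val = 0 := by rw [hget, hcase]; rfl
    have heq : hts l (k+1) = hts l k := by omega
    rw [heq]
    unfold stepOf
    rw [if_neg (by omega), if_pos rfl]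
  · -- down
    have hv : (l.get ⟨k, hkl⟩).val = -1 := by rw [hget, hcase]; rfl
    have heq : hts l k = hts l (k+1) + 1 := by omega
    unfold stepOf
    rw [if_neg (by omega), if_neg (by omega)]

/-- heights of `theta s g` agree with `g` -/
lemma hts_theta {s : ℕ} {g : ℕ → ℕ} (hg0 : g 0 = 0)
    (hstep : ∀ k, k < s → (g (k+1) ≤ g k + 1 ∧ g k ≤ g (k+1) + 1)) :
    ∀ k, k ≤ s → hts (theta s g) k = g k := by
  intro k hk
  have := theta_heights hg0 hstep k hk
  unfold hts
  omega

/-! ### the beta-set associated to a height function -/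

def bg (s : ℕ) (g : ℕ → ℕ) : Finset ℕ :=
  (((Finset.range (s+1)) ×ˢ (Finset.range (s+1))).filter (fun p => p.2 < g p.1)).image
    (fun p => p.2 * (s+1) + p.1)

lemma mem_bg {s : ℕ} {g : ℕ → ℕ} {b : ℕ} :
    b ∈ bg s g ↔ ∃ x q, x ≤ s ∧ q ≤ s ∧ q < g x ∧ b = q * (s+1) + x := by
  unfold bg
  rw [Finset.mem_image]
  constructor
  · rintro ⟨⟨x, q⟩, hmem, rfl⟩
    rw [Finset.mem_filter, Finset.mem_product, Finset.mem_range, Finset.mem_range] at hmem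
    exact ⟨x, q, by omega, by omega, hmem.2, rfl⟩
  · rintro ⟨x, q, hx, hq, hlt, rfl⟩
    refine ⟨(x, q), ?_, rfl⟩
    rw [Finset.mem_filter, Finset.mem_product, Finset.mem_range, Finset.mem_range]
    exact ⟨⟨by omega, by omega⟩, hlt⟩

section GBounds

variable {s : ℕ} {g : ℕ → ℕ}

lemma g_le_left (hg0 : g 0 = 0) (hstep : ∀ k, k < s → (g (k+1) ≤ g k + 1 ∧ g k ≤ g (k+1) + 1))
    (hgs : ∀ x, s ≤ x → g x = 0) : ∀ x, g x ≤ x := by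
  intro x
  induction x with
  | zero => omega
  | succ n ih =>
    rcases Nat.lt_or_ge n s with h | h
    · have := (hstep n h).1; omega
    · have := hgs (n+1) (by omega); omega

lemma g_le_right (hstep : ∀ k, k < s → (g (k+1) ≤ g k + 1 ∧ g k ≤ g (k+1) + 1))
    (hgs : ∀ x, s ≤ x → g x = 0) : ∀ d x, x + d = s → g x ≤ d := by
  intro d
  induction d with
  | zero => intro x hx; have := hgs x (by omega); omega
  | succ n ih =>
    intro x hx
    have h1 := (hstep x (by omega)).2
    have h2 := ih (x+1) (by omega)
    omega

lemma bg_closed (hs : 0 < s) (hg0 : g 0 = 0) (hgs : ∀ x, s ≤ x → g x = 0)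
    (hstep : ∀ k, k < s → (g (k+1) ≤ g k + 1 ∧ g k ≤ g (k+1) + 1)) :
    BClosed s (bg s g) := by
  have hbl := g_le_left hg0 hstep hgs
  have hbr := g_le_right hstep hgs
  have hxbounds : ∀ x q, q < g x → (1 ≤ x ∧ x + 1 ≤ s ∧ q + 1 ≤ x ∧ q + x + 1 ≤ s) := by
    intro x q hq
    have h1 := hbl x
    have hx1 : 1 ≤ x := by
      by_contra h
      have hx0 : x = 0 := by omega
      rw [hx0, hg0] at hq
      omega
    have hxs : x < s := by
      by_contra h
      have := hgs x (by omega)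
      omega
    have h2 := hbr (s - x) x (by omega)
    omega
  refine ⟨?_, ?_, ?_, ?_⟩
  · intro b hb
    obtain ⟨x, q, hx, hq, hlt, rfl⟩ := mem_bg.mp hb
    have := (hxbounds x q hlt).1
    omega
  · intro b hb hsb
    obtain ⟨x, q, hx, hq, hlt, rfl⟩ := mem_bg.mp hb
    obtain ⟨hx1, hxs, hqx, hqxs⟩ := hxbounds x q hlt
    have hq1 : 1 ≤ q := by
      rcases Nat.eq_zero_or_pos q with h0 | h0
      · subst h0; omega
      · exact h0
    have hmul := mul_pred (s := s) hq1
    have heq : q * (s+1) + x - s = (q-1) * (s+1) + (x+1) := by omega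
    rw [heq]
    apply mem_bg.mpr
    refine ⟨x+1, q-1, by omega, by omega, ?_, rfl⟩
    have := (hstep x (by omega)).2
    omega
  · intro b hb hsb
    obtain ⟨x, q, hx, hq, hlt, rfl⟩ := mem_bg.mp hb
    obtain ⟨hx1, hxs, hqx, hqxs⟩ := hxbounds x q hlt
    have hq1 : 1 ≤ q := by
      rcases Nat.eq_zero_or_pos q with h0 | h0
      · subst h0; omega
      · exact h0
    have hmul := mul_pred (s := s) hq1
    have heq : q * (s+1) + x - (s+1) = (q-1) * (s+1) + x := by omega
    rw [heq]
    exact mem_bg.mpr ⟨x, q-1, by omega, by omega, by omega, rfl⟩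
  · intro b hb hsb
    obtain ⟨x, q, hx, hq, hlt, rfl⟩ := mem_bg.mp hb
    obtain ⟨hx1, hxs, hqx, hqxs⟩ := hxbounds x q hlt
    have hq1 : 1 ≤ q := by
      rcases Nat.eq_zero_or_pos q with h0 | h0
      · subst h0; omega
      · exact h0
    have hmul := mul_pred (s := s) hq1
    have heq : q * (s+1) + x - (s+2) = (q-1) * (s+1) + (x-1) := by omega
    rw [heq]
    apply mem_bg.mpr
    refine ⟨x-1, q-1, by omega, by omega, ?_, rfl⟩
    have hst := (hstep (x-1) (by omega)).1
    have hxx : x - 1 + 1 = x := by omega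
    rw [hxx] at hst
    omega

lemma gfun_bg (hg0 : g 0 = 0) (hgs : ∀ x, s ≤ x → g x = 0)
    (hstep : ∀ k, k < s → (g (k+1) ≤ g k + 1 ∧ g k ≤ g (k+1) + 1)) :
    ∀ x, x ≤ s → gfun s (bg s g) x = g x := by
  have hbl := g_le_left hg0 hstep hgs
  intro x hx
  have hfe : (Finset.range s).filter (fun q => q * (s+1) + x ∈ bg s g)
      = Finset.range (g x) := by
    ext q
    rw [Finset.mem_filter, Finset.mem_range, Finset.mem_range]
    constructor
    · rintro ⟨hqs, hmem⟩
      obtain ⟨x', q', hx', hq', hlt', he⟩ := mem_bg.mp hmem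
      obtain ⟨h1, h2⟩ := e_unique (s := s) (show x < s+1 by omega) (show x' < s+1 by omega) he
      subst h1
      subst h2
      exact hlt'
    · intro hq
      have h1 := hbl x
      exact ⟨by omega, mem_bg.mpr ⟨x, q, hx, by omega, hq, rfl⟩⟩
  show ((Finset.range s).filter _).card = g x
  rw [hfe, Finset.card_range]

end GBounds

/-- For every positive integer `s`, the number of `(s, s+1, s+2)`-core partitions is
the `s`-th Motzkin number, i.e. the number of Motzkin paths of length `s`. -/
theorem count_core_three_eq_motzkin (s : ℕ) (hs : 0 < s) :
    Nat.card {p : YPartition // p.IsCore s ∧ p.IsCore (s + 1) ∧ p.IsCore (s + 2)} =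
      motzkin s := by
  have key : ∀ p : YPartition,
      (p.IsCore s ∧ p.IsCore (s+1) ∧ p.IsCore (s+2)) ↔ BClosed s p.bset := by
    intro p
    constructor
    · rintro ⟨h1, h2, h3⟩
      exact ⟨fun b hb => p.bset_pos hb, p.closed_of_isCore (by omega) h1,
        p.closed_of_isCore (by omega) h2, p.closed_of_isCore (by omega) h3⟩
    · rintro ⟨h0, h1, h2, h3⟩
      exact ⟨p.isCore_of_closed (by omega) h1, p.isCore_of_closed (by omega) h2,
        p.isCore_of_closed (by omega) h3⟩
  have gprops : ∀ B : Finset ℕ, BClosed s B →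
      (gfun s B 0 = 0 ∧ gfun s B s = 0 ∧ ∀ k, k < s →
        (gfun s B (k+1) ≤ gfun s B k + 1 ∧ gfun s B k ≤ gfun s B (k+1) + 1)) :=
    fun B hB => ⟨gfun_zero hB, gfun_s hB, fun k hk => gfun_step hB hk⟩
  let F : {p : YPartition // p.IsCore s ∧ p.IsCore (s + 1) ∧ p.IsCore (s + 2)} →
      {l : List MStep // l.length = s ∧ IsMotzkinPath l} := fun pp =>
    ⟨theta s (gfun s pp.1.bset), theta_length s _,
      theta_motzkin (gprops _ ((key pp.1).mp pp.2)).1 (gprops _ ((key pp.1).mp pp.2)).2.1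
        (gprops _ ((key pp.1).mp pp.2)).2.2⟩
  have hbij : Function.Bijective F := by
    constructor
    · rintro ⟨p1, hp1⟩ ⟨p2, hp2⟩ hF
      have hB1 := (key p1).mp hp1
      have hB2 := (key p2).mp hp2
      have hl : theta s (gfun s p1.bset) = theta s (gfun s p2.bset) :=
        congrArg Subtype.val hF
      have hg : ∀ k, k ≤ s → gfun s p1.bset k = gfun s p2.bset k := by
        intro k hk
        have o1 := gprops _ hB1
        have o2 := gprops _ hB2
        have e1 := hts_theta o1.1 o1.2.2 k hk
        have e2 := hts_theta o2.1 o2.2.2 k hk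
        rw [← e1, ← e2, hl]
      have hsub : ∀ (P Q : YPartition), BClosed s P.bset → BClosed s Q.bset →
          (∀ k, k ≤ s → gfun s P.bset k = gfun s Q.bset k) → P.bset ⊆ Q.bset := by
        intro P Q hBP hBQ hgk b hb
        obtain ⟨q, x, rfl, h1, h2⟩ := bclosed_coords hBP b hb
        have hx : x ≤ s := by omega
        have hlt := (mem_iff_lt_gfun hBP hx).mp hb
        rw [hgk x hx] at hlt
        exact (mem_iff_lt_gfun hBQ hx).mpr hlt
      have hBeq : p1.bset = p2.bset :=
        Finset.Subset.antisymm (hsub p1 p2 hB1 hB2 hg)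
          (hsub p2 p1 hB2 hB1 (fun k hk => (hg k hk).symm))
      exact Subtype.ext (YPartition.eq_of_bset_eq hBeq)
    · rintro ⟨l, hlen, hmp⟩
      have hg0 := hts_zero l
      have hgs : ∀ x, s ≤ x → hts l x = 0 := fun x hx => hts_length hmp (by omega)
      have hstep : ∀ k, k < s → (hts l (k+1) ≤ hts l k + 1 ∧ hts l k ≤ hts l (k+1) + 1) :=
        fun k hk => hts_step_bounds hmp (by omega)
      have hBc := bg_closed hs hg0 hgs hstep
      have hpos : ∀ b ∈ bg s (hts l), 0 < b := hBc.1
      have hbset : (YPartition.ofBset (bg s (hts l))).bset = bg s (hts l) :=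
        YPartition.bset_ofBset hpos
      have hcore : (YPartition.ofBset (bg s (hts l))).IsCore s ∧
          (YPartition.ofBset (bg s (hts l))).IsCore (s+1) ∧
          (YPartition.ofBset (bg s (hts l))).IsCore (s+2) :=
        (key _).mpr (by rw [hbset]; exact hBc)
      refine ⟨⟨YPartition.ofBset (bg s (hts l)), hcore⟩, ?_⟩
      apply Subtype.ext
      show theta s (gfun s (YPartition.ofBset (bg s (hts l))).bset) = l
      rw [hbset]
      have hgf := gfun_bg hg0 hgs hstep
      have hth : theta s (gfun s (bg s (hts l))) = theta s (hts l) := by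
        unfold theta
        apply List.map_congr_left
        intro k hk
        rw [List.mem_range] at hk
        rw [hgf k (by omega), hgf (k+1) (by omega)]
      rw [hth]
      exact theta_hts hmp hlen
  calc Nat.card {p : YPartition // p.IsCore s ∧ p.IsCore (s + 1) ∧ p.IsCore (s + 2)}
      = Nat.card {l : List MStep // l.length = s ∧ IsMotzkinPath l} :=
        Nat.card_congr (Equiv.ofBijective F hbij)
  _ = motzkin s := rfl
end

section
/- For nonnegative integers n and i, the number of Motzkin paths of length n with exactly i up steps equals C_i * C(n, 2i), where C_i is the i-th Catalan number. -/
namespace MZ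

def isFlat : MStep → Bool
  | .flat => true
  | _ => false

@[simp] lemma isFlat_up : isFlat .up = false := rfl
@[simp] lemma isFlat_flat : isFlat .flat = true := rfl
@[simp] lemma isFlat_down : isFlat .down = false := rfl

/-- prefix sum -/
def ps (l : List MStep) (k : ℕ) : ℤ := ((l.take k).map MStep.val).sum

@[simp] lemma ps_zero (l : List MStep) : ps l 0 = 0 := rfl
@[simp] lemma ps_nil (k : ℕ) : ps [] k = 0 := by simp [ps]
@[simp] lemma ps_cons (x : MStep) (l : List MStep) (k : ℕ) :
    ps (x :: l) (k + 1) = x.val + ps l k := by simp [ps]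

lemma sum_eq_count (l : List MStep) :
    (l.map MStep.val).sum = (l.count .up : ℤ) - l.count .down := by
  induction l with
  | nil => simp
  | cons x l ih => cases x <;> simp [MStep.val, List.count_cons, ih] <;> ring

lemma length_eq_counts (l : List MStep) :
    l.length = l.count .up + l.count .flat + l.count .down := by
  induction l with
  | nil => simp
  | cons x l ih => cases x <;> simp [List.count_cons, ih] <;> ring

end MZ
namespace MZ

def merge : List Bool → List MStep → List MStep
  | [], _ => []
  | true :: bs, d => .flat :: merge bs d
  | false :: _, [] => []
  | false :: bs, x :: d => x :: merge bs d

lemma merge_length : ∀ (b : List Bool) (d : List MStep),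
    b.count false = d.length → (merge b d).length = b.length
  | [], _, _ => by simp [merge]
  | true :: bs, d, hc => by
    simp [merge, merge_length bs d (by simpa [List.count_cons] using hc)]
  | false :: bs, [], hc => by simp [List.count_cons] at hc
  | false :: bs, x :: d, hc => by
    simp [merge, merge_length bs d (by simpa [List.count_cons] using hc)]

lemma merge_count_up : ∀ (b : List Bool) (d : List MStep),
    b.count false = d.length → (merge b d).count .up = d.count .up
  | [], d, hc => by
    have hd : d = [] := by simpa using (List.length_eq_zero_iff.mp hc.symm)
    simp [merge, hd]
  | true :: bs, d, hc => by
    simp [merge, List.count_cons,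
      merge_count_up bs d (by simpa [List.count_cons] using hc)]
  | false :: bs, [], hc => by simp [List.count_cons] at hc
  | false :: bs, x :: d, hc => by
    simp [merge, List.count_cons,
      merge_count_up bs d (by simpa [List.count_cons] using hc)]

lemma merge_sum : ∀ (b : List Bool) (d : List MStep),
    b.count false = d.length →
    ((merge b d).map MStep.val).sum = (d.map MStep.val).sum
  | [], d, hc => by
    have hd : d = [] := by simpa using (List.length_eq_zero_iff.mp hc.symm)
    simp [merge, hd]
  | true :: bs, d, hc => by
    simp [merge, MStep.val, merge_sum bs d (by simpa [List.count_cons] using hc)]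
  | false :: bs, [], hc => by simp [List.count_cons] at hc
  | false :: bs, x :: d, hc => by
    simp [merge, merge_sum bs d (by simpa [List.count_cons] using hc)]

lemma merge_psA : ∀ (b : List Bool) (d : List MStep),
    b.count false = d.length → ∀ k, ∃ j, ps (merge b d) k = ps d j
  | [], d, hc => by
    have hd : d = [] := by simpa using (List.length_eq_zero_iff.mp hc.symm)
    subst hd; exact fun k => ⟨0, by simp [merge]⟩
  | true :: bs, d, hc => by
    intro k
    match k with
    | 0 => exact ⟨0, by simp⟩
    | k + 1 =>
      obtain ⟨j, hj⟩ := merge_psA bs d (by simpa [List.count_cons] using hc) k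
      exact ⟨j, by simp [merge, MStep.val, hj]⟩
  | false :: bs, [], hc => by simp [List.count_cons] at hc
  | false :: bs, x :: d, hc => by
    intro k
    match k with
    | 0 => exact ⟨0, by simp⟩
    | k + 1 =>
      obtain ⟨j, hj⟩ := merge_psA bs d (by simpa [List.count_cons] using hc) k
      exact ⟨j + 1, by simp [merge, hj]⟩

lemma merge_psB : ∀ (b : List Bool) (d : List MStep),
    b.count false = d.length → ∀ j, ∃ k, ps d j = ps (merge b d) k
  | [], d, hc => by
    have hd : d = [] := by simpa using (List.length_eq_zero_iff.mp hc.symm)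
    subst hd; exact fun j => ⟨0, by simp [merge]⟩
  | true :: bs, d, hc => by
    intro j
    obtain ⟨k, hk⟩ := merge_psB bs d (by simpa [List.count_cons] using hc) j
    exact ⟨k + 1, by simp [merge, MStep.val, hk]⟩
  | false :: bs, [], hc => by simp [List.count_cons] at hc
  | false :: bs, x :: d, hc => by
    intro j
    match j with
    | 0 => exact ⟨0, by simp⟩
    | j + 1 =>
      obtain ⟨k, hk⟩ := merge_psB bs d (by simpa [List.count_cons] using hc) j
      exact ⟨k + 1, by simp [merge, hk]⟩

lemma merge_motzkin_iff (b : List Bool) (d : List MStep)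
    (hc : b.count false = d.length) :
    IsMotzkinPath (merge b d) ↔ IsMotzkinPath d := by
  constructor
  · rintro ⟨h1, h2⟩
    refine ⟨fun j => ?_, by rw [← merge_sum b d hc]; exact h2⟩
    obtain ⟨k, hk⟩ := merge_psB b d hc j
    have h1' : ∀ k, 0 ≤ ps (merge b d) k := h1
    have := h1' k; rw [← hk] at this; exact this
  · rintro ⟨h1, h2⟩
    refine ⟨fun k => ?_, by rw [merge_sum b d hc]; exact h2⟩
    obtain ⟨j, hj⟩ := merge_psA b d hc k
    have h1' : ∀ j, 0 ≤ ps d j := h1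
    have := h1' j; rw [← hj] at this; exact this

lemma merge_split (l : List MStep) :
    merge (l.map isFlat) (l.filter (fun x => !isFlat x)) = l := by
  induction l with
  | nil => rfl
  | cons x l ih => cases x <;> simp_all [merge, isFlat]

lemma split_merge_map : ∀ (b : List Bool) (d : List MStep),
    b.count false = d.length → (∀ x ∈ d, isFlat x = false) →
    (merge b d).map isFlat = b
  | [], _, _, _ => by simp [merge]
  | true :: bs, d, hc, hf => by
    simp [merge, split_merge_map bs d (by simpa [List.count_cons] using hc) hf]
  | false :: bs, [], hc, _ => by simp [List.count_cons] at hc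
  | false :: bs, x :: d, hc, hf => by
    have := hf x (by simp)
    simp [merge, this, split_merge_map bs d (by simpa [List.count_cons] using hc)
      (fun y hy => hf y (by simp [hy]))]

lemma split_merge_filter : ∀ (b : List Bool) (d : List MStep),
    b.count false = d.length → (∀ x ∈ d, isFlat x = false) →
    (merge b d).filter (fun x => !isFlat x) = d
  | [], d, hc, _ => by
    have hd : d = [] := by simpa using (List.length_eq_zero_iff.mp hc.symm)
    simp [merge, hd]
  | true :: bs, d, hc, hf => by
    simp [merge, split_merge_filter bs d (by simpa [List.count_cons] using hc) hf]
  | false :: bs, [], hc, _ => by simp [List.count_cons] at hc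
  | false :: bs, x :: d, hc, hf => by
    have := hf x (by simp)
    simp [merge, this, split_merge_filter bs d (by simpa [List.count_cons] using hc)
      (fun y hy => hf y (by simp [hy]))]

lemma count_false_map_isFlat (l : List MStep) :
    (l.map isFlat).count false = (l.filter (fun x => !isFlat x)).length := by
  induction l with
  | nil => rfl
  | cons x l ih => cases x <;> simp_all [List.count_cons, isFlat]

lemma length_filter_not_flat (l : List MStep) :
    (l.filter (fun x => !isFlat x)).length = l.count .up + l.count .down := by
  induction l with
  | nil => rfl
  | cons x l ih => cases x <;> simp_all [List.count_cons, isFlat] <;> omega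

lemma count_up_filter (l : List MStep) :
    (l.filter (fun x => !isFlat x)).count .up = l.count .up := by
  induction l with
  | nil => rfl
  | cons x l ih => cases x <;> simp_all [List.count_cons, isFlat]

end MZ

namespace MZ
open DyckStep

def toD : MStep → DyckStep
  | .up => U
  | _ => D

def toM : DyckStep → MStep
  | U => .up
  | D => .down

lemma toD_toM : ∀ s, toD (toM s) = s := by intro s; cases s <;> rfl

lemma count_toD_U (l : List MStep) (hf : ∀ x ∈ l, isFlat x = false) :
    (l.map toD).count U = l.count .up := by
  induction l with
  | nil => rfl
  | cons x l ih =>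
    have := hf x (by simp)
    have ih' := ih (fun y hy => hf y (by simp [hy]))
    cases x <;> simp_all [List.count_cons, toD, isFlat]

lemma count_toD_D (l : List MStep) (hf : ∀ x ∈ l, isFlat x = false) :
    (l.map toD).count D = l.count .down := by
  induction l with
  | nil => rfl
  | cons x l ih =>
    have := hf x (by simp)
    have ih' := ih (fun y hy => hf y (by simp [hy]))
    cases x <;> simp_all [List.count_cons, toD, isFlat]

lemma count_toM_up (w : List DyckStep) : (w.map toM).count .up = w.count U := by
  induction w with
  | nil => rfl
  | cons x w ih => cases x <;> simp_all [List.count_cons, toM]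

lemma count_toM_down (w : List DyckStep) : (w.map toM).count .down = w.count D := by
  induction w with
  | nil => rfl
  | cons x w ih => cases x <;> simp_all [List.count_cons, toM]

lemma toM_toD (l : List MStep) (hf : ∀ x ∈ l, isFlat x = false) :
    (l.map toD).map toM = l := by
  induction l with
  | nil => rfl
  | cons x l ih =>
    have := hf x (by simp)
    have ih' := ih (fun y hy => hf y (by simp [hy]))
    cases x <;> simp_all [toD, toM, isFlat]

lemma no_flat_toM (w : List DyckStep) : ∀ x ∈ w.map toM, isFlat x = false := by
  intro x hx
  simp only [List.mem_map] at hx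
  obtain ⟨s, _, rfl⟩ := hx
  cases s <;> rfl

/-- The Dyck-word equivalence. -/
noncomputable def dyckEquiv (i : ℕ) :
    {d : List MStep // IsMotzkinPath d ∧ (∀ x ∈ d, isFlat x = false) ∧
      d.count .up = i} ≃ {p : DyckWord // p.semilength = i} where
  toFun d := by
    obtain ⟨d, hm, hf, hcnt⟩ := d
    have hsum := hm.2
    rw [sum_eq_count] at hsum
    have hud : d.count .up = d.count .down := by exact_mod_cast by omega
    refine ⟨⟨d.map toD, ?_, ?_⟩, ?_⟩
    · rw [count_toD_U d hf, count_toD_D d hf, hud]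
    · intro k
      have h1 := hm.1 k
      have hfk : ∀ x ∈ d.take k, isFlat x = false :=
        fun x hx => hf x (List.take_subset k d hx)
      rw [sum_eq_count] at h1
      have : (d.take k).count MStep.down ≤ (d.take k).count MStep.up := by
        exact_mod_cast by omega
      rw [← List.map_take, count_toD_U _ hfk, count_toD_D _ hfk]

      exact this
    · simpa [DyckWord.semilength, count_toD_U d hf] using hcnt
  invFun p := by
    obtain ⟨p, hsl⟩ := p
    refine ⟨p.toList.map toM, ⟨?_, ?_⟩, no_flat_toM _, ?_⟩
    · intro k
      rw [← List.map_take, sum_eq_count, count_toM_up, count_toM_down]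
      have := p.count_D_le_count_U k
      omega
    · rw [sum_eq_count, count_toM_up, count_toM_down, p.count_U_eq_count_D]
      ring
    · rw [count_toM_up]; exact hsl
  left_inv := by
    rintro ⟨d, hm, hf, hcnt⟩
    simp [toM_toD d hf]
  right_inv := by
    rintro ⟨p, hsl⟩
    ext1
    ext1
    show List.map toD (List.map toM p.toList) = p.toList
    rw [List.map_map, show toD ∘ toM = id from funext toD_toM, List.map_id]

end MZ

namespace MZ

lemma count_false_ofFn : ∀ (n : ℕ) (f : Fin n → Bool),
    (List.ofFn f).count false = (Finset.univ.filter (fun i => f i = false)).card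
  | 0, f => by simp
  | n + 1, f => by
    rw [List.ofFn_succ, List.count_cons, count_false_ofFn n (fun i => f i.succ)]
    rw [Finset.card_filter, Finset.card_filter, Fin.sum_univ_succ]
    cases h : f 0 <;> simp [h, Nat.add_comm]

/-- Bool lists of length n with k falses ≃ k-subsets of Fin n. -/
def boolEquiv (n k : ℕ) :
    {b : List Bool // b.length = n ∧ b.count false = k} ≃
      {s : Finset (Fin n) // s.card = k} where
  toFun b :=
    ⟨Finset.univ.filter (fun i : Fin n => b.1.get (Fin.cast b.2.1.symm i) = false), by
      obtain ⟨b, hl, hk⟩ := b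
      have hb : b = List.ofFn (fun i : Fin n => b.get (Fin.cast hl.symm i)) := by
        apply List.ext_get (by simp [hl])
        intro j h1 h2
        simp [List.get_ofFn]
      conv_lhs => rw [← count_false_ofFn n (fun i : Fin n => b.get (Fin.cast hl.symm i)),
        ← hb]
      exact hk⟩
  invFun s :=
    ⟨List.ofFn (fun i : Fin n => decide (i ∉ s.1)), by simp, by
      rw [count_false_ofFn]
      have he : (Finset.univ.filter (fun i : Fin n => decide (i ∉ s.1) = false)) = s.1 := by
        ext i; simp
      rw [he, s.2]⟩
  left_inv := by
    rintro ⟨b, hl, hk⟩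
    ext1
    apply List.ext_get (by simp [hl])
    intro j h1 h2
    simp only [List.get_ofFn, Finset.mem_filter, Finset.mem_univ, true_and]
    rcases hg : b.get ⟨j, h2⟩ with _ | _ <;> simp_all
  right_inv := by
    rintro ⟨s, hs⟩
    ext1
    ext i
    simp [List.get_ofFn]

end MZ

namespace MZ

lemma count_down_eq (l : List MStep) (hm : IsMotzkinPath l) :
    l.count .down = l.count .up := by
  have := hm.2
  rw [sum_eq_count] at this
  exact_mod_cast by omega

/-- Splitting a Motzkin path into flat positions and its Dyck part. -/
def mainEquiv (n i : ℕ) :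
    {l : List MStep // l.length = n ∧ IsMotzkinPath l ∧ l.count MStep.up = i} ≃
      {b : List Bool // b.length = n ∧ b.count false = 2 * i} ×
      {d : List MStep // IsMotzkinPath d ∧ (∀ x ∈ d, isFlat x = false) ∧
        d.count .up = i} where
  toFun l :=
    (⟨l.1.map isFlat, by simp [l.2.1], by
      rw [count_false_map_isFlat, length_filter_not_flat,
        count_down_eq l.1 l.2.2.1, l.2.2.2]
      ring⟩,
     ⟨l.1.filter (fun x => !isFlat x), by
      refine ⟨?_, ?_, ?_⟩
      · rw [← merge_motzkin_iff (l.1.map isFlat) _ (count_false_map_isFlat l.1),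
          merge_split]
        exact l.2.2.1
      · intro x hx
        have := List.of_mem_filter hx
        simpa using this
      · rw [count_up_filter]; exact l.2.2.2⟩)
  invFun bd :=
    ⟨merge bd.1.1 bd.2.1, by
      have hdl : bd.2.1.length = 2 * i := by
        rw [length_eq_counts bd.2.1, bd.2.2.2.2,
          count_down_eq bd.2.1 bd.2.2.1,
          bd.2.2.2.2, List.count_eq_zero.mpr ?_]
        · ring
        · intro hmem
          simpa using bd.2.2.2.1 _ hmem
      have hc : bd.1.1.count false = bd.2.1.length := by rw [hdl, bd.1.2.2]
      refine ⟨?_, ?_, ?_⟩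
      · rw [merge_length _ _ hc, bd.1.2.1]
      · exact (merge_motzkin_iff _ _ hc).mpr bd.2.2.1
      · rw [merge_count_up _ _ hc, bd.2.2.2.2]⟩
  left_inv l := by
    ext1
    exact merge_split l.1
  right_inv bd := by
    have hdl : bd.2.1.length = 2 * i := by
      rw [length_eq_counts bd.2.1, bd.2.2.2.2,
        count_down_eq bd.2.1 bd.2.2.1,
        bd.2.2.2.2, List.count_eq_zero.mpr ?_]
      · ring
      · intro hmem
        simpa using bd.2.2.2.1 _ hmem
    have hc : bd.1.1.count false = bd.2.1.length := by rw [hdl, bd.1.2.2]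
    ext1
    · ext1
      exact split_merge_map _ _ hc bd.2.2.2.1
    · ext1
      exact split_merge_filter _ _ hc bd.2.2.2.1

end MZ


/-- For nonnegative integers `n` and `i`, the number of Motzkin paths of length `n`
with exactly `i` up steps is `C_i * C(n, 2i)`, where `C_i` is the `i`-th Catalan
number. -/
theorem count_motzkin_with_up_steps (n i : ℕ) :
    Nat.card {l : List MStep // l.length = n ∧ IsMotzkinPath l ∧ l.count MStep.up = i} =
      catalan i * n.choose (2 * i) := by
  rw [Nat.card_congr (MZ.mainEquiv n i), Nat.card_prod,
    Nat.card_congr (MZ.boolEquiv n (2 * i)), Nat.card_congr (MZ.dyckEquiv i),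
    Nat.card_eq_fintype_card, Nat.card_eq_fintype_card,
    Fintype.card_finset_len, DyckWord.card_dyckWord_semilength_eq_catalan,
    Fintype.card_fin, Nat.mul_comm]
end

section
/- For every nonnegative integer n, the number of symmetric Motzkin paths of length n equals the finite sum over i ≥ 0 of C(⌊n/2⌋, i) * C(i, ⌊i/2⌋). -/
namespace SymAux

open Finset List

attribute [local instance] Classical.propDecidable

/-- The height of the endpoint of a path. -/
def hgt (l : List MStep) : ℤ := (l.map MStep.val).sum

/-- A prefix of a Motzkin path: all partial sums nonnegative. -/
def PP (l : List MStep) : Prop := ∀ k, 0 ≤ hgt (l.take k)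

instance : Fintype MStep :=
  ⟨⟨{.up, .flat, .down}, by decide⟩, fun x => by cases x <;> decide⟩

/-- All lists of `MStep` of length `n`, as a finset. -/
def allLists : ℕ → Finset (List MStep)
  | 0 => {[]}
  | n + 1 => ((Finset.univ : Finset MStep) ×ˢ allLists n).image fun p => p.1 :: p.2

lemma mem_allLists : ∀ (n : ℕ) (l : List MStep), l ∈ allLists n ↔ l.length = n
  | 0, l => by cases l <;> simp [allLists]
  | n + 1, l => by
    cases l with
    | nil => simp [allLists]
    | cons a t => simp [allLists, mem_allLists n t]

@[simp] lemma swap_swap (s : MStep) : s.swap.swap = s := by cases s <;> rfl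

@[simp] lemma val_swap (s : MStep) : s.swap.val = -s.val := by cases s <;> rfl

@[simp] lemma hgt_nil : hgt [] = 0 := rfl

@[simp] lemma hgt_cons (a : MStep) (t : List MStep) : hgt (a :: t) = a.val + hgt t := by
  simp [hgt]

@[simp] lemma hgt_append (l r : List MStep) : hgt (l ++ r) = hgt l + hgt r := by
  simp [hgt]

@[simp] lemma hgt_singleton (s : MStep) : hgt [s] = s.val := by simp

@[simp] lemma hgt_reverse (l : List MStep) : hgt l.reverse = hgt l := by
  simp [hgt, List.sum_reverse]

@[simp] lemma hgt_map_swap (l : List MStep) : hgt (l.map MStep.swap) = -hgt l := by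
  induction l with
  | nil => rfl
  | cons a t ih => simp [ih]; ring

lemma hgt_take_add_drop (l : List MStep) (k : ℕ) : hgt (l.take k) + hgt (l.drop k) = hgt l := by
  rw [← hgt_append, List.take_append_drop]

lemma PP_nonneg {l : List MStep} (h : PP l) : 0 ≤ hgt l := by
  simpa using h l.length

lemma hgt_le_length (l : List MStep) : hgt l ≤ (l.length : ℤ) := by
  induction l with
  | nil => simp
  | cons a t ih =>
    have : a.val ≤ 1 := by cases a <;> decide
    simp only [hgt_cons, List.length_cons]
    push_cast
    omega

lemma pp_take {l : List MStep} (h : PP l) (m : ℕ) : PP (l.take m) := by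
  intro k
  rw [List.take_take]
  exact h _

/-- The key computation for reflected halves. -/
lemma hgt_take_refl (p : List MStep) (j : ℕ) :
    hgt ((p.reverse.map MStep.swap).take j) = hgt (p.take (p.length - j)) - hgt p := by
  rw [← List.map_take, hgt_map_swap, List.take_reverse, hgt_reverse]
  have := hgt_take_add_drop p (p.length - j)
  omega

lemma pp_concat (t : List MStep) (s : MStep) :
    PP (t ++ [s]) ↔ PP t ∧ 0 ≤ hgt t + s.val := by
  constructor
  · intro h
    refine ⟨fun k => ?_, ?_⟩
    · rcases le_or_gt k t.length with hk | hk
      · have := h k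
        rwa [List.take_append, Nat.sub_eq_zero_of_le hk, List.take_zero,
          List.append_nil] at this
      · rw [List.take_of_length_le (by omega)]
        have := h t.length
        rwa [List.take_append, Nat.sub_self, List.take_zero, List.append_nil,
          List.take_length] at this
    · have := h (t.length + 1)
      rwa [List.take_append, List.take_of_length_le (by omega),
        Nat.add_sub_cancel_left, List.take_of_length_le (by simp), hgt_append,
        hgt_singleton] at this
  · rintro ⟨h1, h2⟩ k
    rw [List.take_append, hgt_append]
    rcases le_or_gt k t.length with hk | hk
    · rw [Nat.sub_eq_zero_of_le hk, List.take_zero, hgt_nil]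
      have := h1 k
      omega
    · rw [List.take_of_length_le (by omega), List.take_of_length_le (by simp; omega),
        hgt_singleton]
      omega

/-- Prefix paths of length `m` ending at height `h`. -/
noncomputable def A (m : ℕ) (h : ℤ) : Finset (List MStep) :=
  (allLists m).filter fun l => PP l ∧ hgt l = h

/-- All prefix paths of length `m`. -/
noncomputable def B (m : ℕ) : Finset (List MStep) :=
  (allLists m).filter PP

lemma mem_A {m : ℕ} {h : ℤ} {l : List MStep} :
    l ∈ A m h ↔ l.length = m ∧ PP l ∧ hgt l = h := by
  simp [A, mem_allLists]

lemma A_neg (m : ℕ) {h : ℤ} (hh : h < 0) : A m h = ∅ := by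
  ext l
  simp only [mem_A, Finset.notMem_empty, iff_false]
  rintro ⟨-, hpp, hsum⟩
  have := PP_nonneg hpp
  omega

lemma concat_injective (s : MStep) : Function.Injective (fun t : List MStep => t ++ [s]) := by
  intro a b hab
  simpa using (List.append_inj' hab rfl).1

lemma A_succ_eq (m : ℕ) (h : ℤ) (h0 : 0 ≤ h) :
    A (m + 1) h = ((A m (h + 1)).image (fun t => t ++ [MStep.down])) ∪
      ((A m h).image (fun t => t ++ [MStep.flat])) ∪
      ((A m (h - 1)).image (fun t => t ++ [MStep.up])) := by
  ext l
  simp only [mem_A, Finset.mem_union, Finset.mem_image]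
  constructor
  · rintro ⟨hlen, hpp, hsum⟩
    have hne : l ≠ [] := by rintro rfl; simp at hlen
    obtain ⟨t, s, rfl⟩ : ∃ t s, l = t ++ [s] :=
      ⟨l.dropLast, l.getLast hne, (List.dropLast_append_getLast hne).symm⟩
    have hlt : t.length = m := by simpa using hlen
    obtain ⟨hppt, -⟩ := (pp_concat t s).1 hpp
    have hsum' : hgt t + s.val = h := by simpa using hsum
    cases s with
    | down =>
      refine Or.inl (Or.inl ⟨t, ⟨hlt, hppt, ?_⟩, rfl⟩)
      simp only [MStep.val] at hsum'; omega
    | flat =>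
      refine Or.inl (Or.inr ⟨t, ⟨hlt, hppt, ?_⟩, rfl⟩)
      simp only [MStep.val] at hsum'; omega
    | up =>
      refine Or.inr ⟨t, ⟨hlt, hppt, ?_⟩, rfl⟩
      simp only [MStep.val] at hsum'; omega
  · rintro ((⟨t, ht, rfl⟩ | ⟨t, ht, rfl⟩) | ⟨t, ht, rfl⟩) <;>
      obtain ⟨hlt, hppt, hst⟩ := ht
    · exact ⟨by simp [hlt], (pp_concat t _).2 ⟨hppt, by simp [MStep.val]; omega⟩,
        by simp [MStep.val]; omega⟩
    · exact ⟨by simp [hlt], (pp_concat t _).2 ⟨hppt, by simp [MStep.val]; omega⟩,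
        by simp [MStep.val]; omega⟩
    · exact ⟨by simp [hlt], (pp_concat t _).2 ⟨hppt, by simp [MStep.val]; omega⟩,
        by simp [MStep.val]; omega⟩

lemma last_ne_aux {s₁ s₂ : MStep} (hne : s₁ ≠ s₂) (F₁ F₂ : Finset (List MStep)) :
    Disjoint (F₁.image (fun t => t ++ [s₁])) (F₂.image (fun t => t ++ [s₂])) := by
  rw [Finset.disjoint_left]
  rintro l hl1 hl2
  obtain ⟨t1, -, rfl⟩ := Finset.mem_image.1 hl1
  obtain ⟨t2, -, heq⟩ := Finset.mem_image.1 hl2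
  exact hne (by simpa using (List.append_inj' heq rfl).2.symm)

lemma A_succ_card (m : ℕ) (h : ℤ) (h0 : 0 ≤ h) :
    (A (m + 1) h).card = (A m (h + 1)).card + (A m h).card + (A m (h - 1)).card := by
  rw [A_succ_eq m h h0, Finset.card_union_of_disjoint, Finset.card_union_of_disjoint,
    Finset.card_image_of_injective _ (concat_injective _),
    Finset.card_image_of_injective _ (concat_injective _),
    Finset.card_image_of_injective _ (concat_injective _)]
  · exact last_ne_aux (by decide) _ _
  · rw [Finset.disjoint_union_left]
    exact ⟨last_ne_aux (by decide) _ _, last_ne_aux (by decide) _ _⟩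

/-- Number of nonnegative `±1`-walks of length `i` ending at height `h`. -/
def W : ℕ → ℕ → ℕ
  | 0, 0 => 1
  | 0, _ + 1 => 0
  | i + 1, 0 => W i 1
  | i + 1, h + 1 => W i (h + 2) + W i h

lemma W_zero : ∀ i h, i < h → W i h = 0
  | 0, _ + 1, _ => rfl
  | i + 1, h + 1, hih => by
    have h1 : W i (h + 2) = 0 := W_zero i (h + 2) (by omega)
    have h2 : W i h = 0 := W_zero i h (by omega)
    simp [W, h1, h2]

lemma W_sum : ∀ i, ∀ h, ∑ k ∈ Finset.Ico h (i + 2), W i k = i.choose ((i + h + 1) / 2)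
  | 0, h => by
    match h with
    | 0 => decide
    | 1 => decide
    | h + 2 => rw [Finset.Ico_eq_empty (by omega), Nat.choose_eq_zero_of_lt (by omega)]; rfl
  | i + 1, h => by
    have key : ∀ h', ∑ k ∈ Finset.Ico (h' + 1) (i + 3), W (i + 1) k =
        (i + 1).choose ((i + h' + 3) / 2) := by
      intro h'
      rw [Finset.sum_Ico_eq_sum_range]
      have step : ∀ j ∈ Finset.range (i + 3 - (h' + 1)),
          W (i + 1) (h' + 1 + j) = W i (h' + 2 + j) + W i (h' + j) := by
        intro j _
        have e : h' + 1 + j = (h' + j) + 1 := by omega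
        rw [e]
        show W i ((h' + j) + 2) + W i (h' + j) = _
        congr 1
        · congr 1; omega
      rw [Finset.sum_congr rfl step, Finset.sum_add_distrib]
      have e1 : i + 3 - (h' + 1) = i + 2 - h' := by omega
      rw [e1]
      have first : ∑ j ∈ Finset.range (i + 2 - h'), W i (h' + 2 + j) =
          i.choose ((i + h' + 3) / 2) := by
        have h2 := W_sum i (h' + 2)
        rw [Finset.sum_Ico_eq_sum_range,
          show i + 2 - (h' + 2) = i - h' by omega,
          show i + (h' + 2) + 1 = i + h' + 3 by ring] at h2
        rw [← h2]
        refine (Finset.sum_subset (Finset.range_subset_range.2 (by omega)) ?_).symm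
        intro x _ hx
        simp only [Finset.mem_range, not_lt] at hx
        exact W_zero i (h' + 2 + x) (by omega)
      have second : ∑ j ∈ Finset.range (i + 2 - h'), W i (h' + j) =
          i.choose ((i + h' + 1) / 2) := by
        have := W_sum i h'
        rwa [Finset.sum_Ico_eq_sum_range] at this
      rw [first, second]
      have e2 : (i + h' + 3) / 2 = (i + h' + 1) / 2 + 1 := by omega
      rw [e2, Nat.choose_succ_succ']
      omega
    match h with
    | h' + 1 =>
      rw [show i + 1 + 2 = i + 3 by omega,
        show (i + 1 + (h' + 1) + 1) / 2 = (i + h' + 3) / 2 by omega]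
      exact key h'
    | 0 =>
      rw [show i + 1 + 2 = i + 3 by omega,
        show (i + 1 + 0 + 1) / 2 = (i + 2) / 2 by omega,
        Finset.sum_eq_sum_Ico_succ_bot (by omega), key 0,
        show (i + 0 + 3) / 2 = (i + 3) / 2 by omega]
      show W i 1 + _ = _
      have i1 := W_sum i 1
      rw [Finset.sum_eq_sum_Ico_succ_bot (by omega), W_sum i 2,
        show (i + 2 + 1) / 2 = (i + 3) / 2 by omega,
        show (i + 1 + 1) / 2 = (i + 2) / 2 by omega] at i1
      rcases Nat.even_or_odd i with ⟨t, rfl⟩ | ⟨t, rfl⟩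
      · have e1 : (t + t + 2) / 2 = t + 1 := by omega
        have e2 : (t + t + 3) / 2 = t + 1 := by omega
        rw [e1, e2] at i1 ⊢
        have w0 : W (t + t) 1 = 0 := by omega
        rw [w0, zero_add]
      · have e1 : (2 * t + 1 + 2) / 2 = t + 1 := by omega
        have e2 : (2 * t + 1 + 3) / 2 = t + 2 := by omega
        rw [e1, e2] at i1 ⊢
        have p1 : (2 * t + 1 + 1).choose (t + 2) =
            (2 * t + 1).choose (t + 1) + (2 * t + 1).choose (t + 2) :=
          Nat.choose_succ_succ' (2 * t + 1) (t + 1)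
        have p2 : (2 * t + 1 + 1).choose (t + 1) =
            (2 * t + 1).choose t + (2 * t + 1).choose (t + 1) :=
          Nat.choose_succ_succ' (2 * t + 1) t
        have sym : (2 * t + 1).choose t = (2 * t + 1).choose (t + 1) := by
          have e : 2 * t + 1 - (t + 1) = t := by omega
          calc (2 * t + 1).choose t = (2 * t + 1).choose (2 * t + 1 - (t + 1)) := by rw [e]
            _ = (2 * t + 1).choose (t + 1) := Nat.choose_symm (by omega)
        omega

/-- The counting function for prefix paths. -/
noncomputable def N (m h : ℕ) : ℕ := (A m (h : ℤ)).card

lemma N_zero (h : ℕ) : N 0 h = if h = 0 then 1 else 0 := by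
  unfold N A
  rcases eq_or_ne h 0 with rfl | hh
  · rw [if_pos rfl]
    convert Finset.card_singleton ([] : List MStep)
    ext l
    rcases l with _ | ⟨a, t⟩
    · simp [allLists, PP]
    · simp [allLists]
  · rw [if_neg hh]
    rw [Finset.card_eq_zero]
    ext l
    rcases l with _ | ⟨a, t⟩
    · simp [allLists]
      intro h'
      omega
    · simp [allLists]

lemma N_succ_zero (m : ℕ) : N (m + 1) 0 = N m 1 + N m 0 := by
  unfold N
  rw [show ((0 : ℕ) : ℤ) = (0 : ℤ) by norm_num, A_succ_card m 0 le_rfl]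
  rw [A_neg m (by norm_num : (0 : ℤ) - 1 < 0)]
  simp

lemma N_succ_succ (m h : ℕ) : N (m + 1) (h + 1) = N m (h + 2) + N m (h + 1) + N m h := by
  unfold N
  have := A_succ_card m ((h : ℤ) + 1) (by positivity)
  push_cast
  convert this using 4 <;> push_cast <;> ring

lemma N_eq : ∀ m h, N m h = ∑ i ∈ Finset.range (m + 1), m.choose i * W i h := by
  intro m
  induction m with
  | zero =>
    intro h
    rw [N_zero]
    rcases h with _ | h <;> simp [W]
  | succ m ih =>
    have expand : ∀ h, ∑ i ∈ Finset.range (m + 2), (m + 1).choose i * W i h =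
        (∑ i ∈ Finset.range (m + 1), m.choose i * W (i + 1) h) +
          ∑ i ∈ Finset.range (m + 1), m.choose i * W i h := by
      intro h
      rw [Finset.sum_range_succ' (fun i => (m + 1).choose i * W i h)]
      have : ∀ i ∈ Finset.range (m + 1), (m + 1).choose (i + 1) * W (i + 1) h =
          m.choose i * W (i + 1) h + m.choose (i + 1) * W (i + 1) h := by
        intro i _
        rw [Nat.choose_succ_succ', add_mul]
      rw [Finset.sum_congr rfl this, Finset.sum_add_distrib]
      have re : (∑ i ∈ Finset.range (m + 1), m.choose (i + 1) * W (i + 1) h) +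
          (m + 1).choose 0 * W 0 h = ∑ i ∈ Finset.range (m + 1), m.choose i * W i h := by
        have aux : (∑ i ∈ Finset.range (m + 1), m.choose (i + 1) * W (i + 1) h) +
            m.choose 0 * W 0 h = ∑ i ∈ Finset.range (m + 2), m.choose i * W i h :=
          (Finset.sum_range_succ' (fun i => m.choose i * W i h) (m + 1)).symm
        rw [Finset.sum_range_succ (fun i => m.choose i * W i h) (m + 1),
          Nat.choose_succ_self, zero_mul, add_zero] at aux
        simpa using aux
      omega
    intro h
    match h with
    | 0 =>
      rw [N_succ_zero, expand 0, ih 1, ih 0]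
      congr 1
    | h + 1 =>
      rw [N_succ_succ, expand (h + 1), ih (h + 2), ih (h + 1), ih h]
      have : ∀ i ∈ Finset.range (m + 1), m.choose i * W (i + 1) (h + 1) =
          m.choose i * W i (h + 2) + m.choose i * W i h := by
        intro i _
        show m.choose i * (W i (h + 2) + W i h) = _
        ring
      rw [Finset.sum_congr rfl this, Finset.sum_add_distrib]
      ring

lemma B_card_fib (m : ℕ) : (B m).card = ∑ h ∈ Finset.range (m + 1), N m h := by
  rw [Finset.card_eq_sum_card_fiberwise
    (f := fun l => (hgt l).toNat) (t := Finset.range (m + 1)) ?_]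
  · refine Finset.sum_congr rfl fun h hh => ?_
    unfold N
    congr 1
    ext l
    simp only [B, A, Finset.mem_filter, mem_allLists]
    constructor
    · rintro ⟨⟨h1, h2⟩, h3⟩
      refine ⟨h1, h2, ?_⟩
      have := PP_nonneg h2
      omega
    · rintro ⟨h1, h2, h3⟩
      refine ⟨⟨h1, h2⟩, ?_⟩
      omega
  · intro l hl
    simp only [Finset.mem_coe, B, Finset.mem_filter, mem_allLists] at hl
    have h1 := PP_nonneg hl.2
    have h2 := hgt_le_length l
    rw [hl.1] at h2
    simp only [Finset.mem_coe, Finset.mem_range]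
    omega

lemma W_total (i M : ℕ) (hM : i + 1 ≤ M) :
    ∑ h ∈ Finset.range M, W i h = i.choose (i / 2) := by
  have base := W_sum i 0
  rw [← Finset.range_eq_Ico] at base
  have trunc : ∀ K, i + 1 ≤ K → ∑ h ∈ Finset.range K, W i h =
      ∑ h ∈ Finset.range (i + 1), W i h := by
    intro K hK
    refine (Finset.sum_subset (Finset.range_subset_range.2 hK) ?_).symm
    intro x _ hx
    simp only [Finset.mem_range, not_lt] at hx
    exact W_zero i x (by omega)
  rw [trunc M hM, ← trunc (i + 2) (by omega), base,
    show (i + 0 + 1) / 2 = (i + 1) / 2 by omega,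
    ← Nat.choose_symm (show (i + 1) / 2 ≤ i by omega)]
  congr 1
  omega

lemma B_card (m : ℕ) : (B m).card = ∑ i ∈ Finset.range (m + 1), m.choose i * i.choose (i / 2) := by
  rw [B_card_fib]
  have : ∀ h ∈ Finset.range (m + 1), N m h = ∑ i ∈ Finset.range (m + 1), m.choose i * W i h :=
    fun h _ => N_eq m h
  rw [Finset.sum_congr rfl this, Finset.sum_comm]
  refine Finset.sum_congr rfl fun i hi => ?_
  rw [← Finset.mul_sum, W_total i (m + 1) (by simp at hi; omega)]

lemma card_subtype (n : ℕ) (Q : List MStep → Prop) :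
    Nat.card {l : List MStep // l.length = n ∧ Q l} = ((allLists n).filter Q).card := by
  rw [← Nat.card_eq_finsetCard]
  exact Nat.card_congr (Equiv.subtypeEquivRight (by simp [mem_allLists]))

lemma refl_cancel (p : List MStep) :
    (p.reverse.map MStep.swap).reverse.map MStep.swap = p := by
  rw [List.map_reverse, List.map_map]
  simp [Function.comp_def]

lemma mem_B {m : ℕ} {p : List MStep} : p ∈ B m ↔ p.length = m ∧ PP p := by
  simp [B, mem_allLists]

lemma take_mem_B {n m : ℕ} {l : List MStep} (hlen : l.length = n) (hpp : PP l) (hm : m ≤ n) :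
    l.take m ∈ B m := by
  rw [mem_B]
  exact ⟨by simp [hlen]; omega, pp_take hpp m⟩

lemma pp_glue {m : ℕ} {p : List MStep} (hlen : p.length = m) (hpp : PP p) (q : List MStep)
    (hq : ∀ j, 0 < j → ∃ t, hgt (q.take j) = hgt (p.take t) - hgt p) :
    PP (p ++ q) := by
  intro k
  rw [List.take_append, hgt_append, hlen]
  rcases le_or_gt k m with hk | hk
  · rw [Nat.sub_eq_zero_of_le hk]
    simp only [List.take_zero, hgt_nil, add_zero]
    exact hpp k
  · rw [List.take_of_length_le (by omega)]
    obtain ⟨t, ht⟩ := hq (k - m) (by omega)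
    rw [ht]
    have := hpp t
    omega

lemma S_even (m : ℕ) :
    ((allLists (2 * m)).filter fun l => IsMotzkinPath l ∧ IsSymmetricPath l).card =
      (B m).card := by
  refine Finset.card_nbij' (fun l => l.take m)
    (fun p => p ++ p.reverse.map MStep.swap) ?_ ?_ ?_ ?_
  · intro l hl
    simp only [Finset.mem_coe, Finset.mem_filter, mem_allLists] at hl
    exact take_mem_B hl.1 hl.2.1.1 (by omega)
  · intro p hp
    obtain ⟨hlen, hpp⟩ := mem_B.1 hp
    simp only [Finset.mem_coe, Finset.mem_filter, mem_allLists]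
    refine ⟨by simp only [List.length_append, List.length_map, List.length_reverse, hlen]; omega,
      ⟨?_, show hgt (p ++ p.reverse.map MStep.swap) = 0 by simp⟩, ?_⟩
    · refine pp_glue hlen hpp _ fun j hj => ⟨p.length - j, ?_⟩
      rw [hgt_take_refl]
    · show (p ++ p.reverse.map MStep.swap).reverse.map MStep.swap = _
      rw [List.reverse_append, List.map_append, refl_cancel]
  · intro l hl
    simp only [Finset.mem_coe, Finset.mem_filter, mem_allLists] at hl
    obtain ⟨hlen, -, hsym⟩ := hl
    have hdrop : l.drop m = (l.take m).reverse.map MStep.swap := by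
      conv_lhs => rw [← hsym]
      rw [← List.map_drop, List.drop_reverse, hlen, show 2 * m - m = m by omega]
    conv_rhs => rw [← List.take_append_drop m l]
    rw [hdrop]
  · intro p hp
    exact List.take_left' (mem_B.1 hp).1

lemma S_odd (m : ℕ) :
    ((allLists (2 * m + 1)).filter fun l => IsMotzkinPath l ∧ IsSymmetricPath l).card =
      (B m).card := by
  refine Finset.card_nbij' (fun l => l.take m)
    (fun p => p ++ MStep.flat :: p.reverse.map MStep.swap) ?_ ?_ ?_ ?_
  · intro l hl
    simp only [Finset.mem_coe, Finset.mem_filter, mem_allLists] at hl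
    exact take_mem_B hl.1 hl.2.1.1 (by omega)
  · intro p hp
    obtain ⟨hlen, hpp⟩ := mem_B.1 hp
    simp only [Finset.mem_coe, Finset.mem_filter, mem_allLists]
    refine ⟨by simp only [List.length_append, List.length_map, List.length_reverse, hlen,
        List.length_cons]; omega,
      ⟨?_, show hgt (p ++ MStep.flat :: p.reverse.map MStep.swap) = 0 by simp [MStep.val]⟩, ?_⟩
    · refine pp_glue hlen hpp _ fun j hj => ?_
      obtain ⟨j', rfl⟩ : ∃ j', j = j' + 1 := ⟨j - 1, by omega⟩
      refine ⟨p.length - j', ?_⟩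
      rw [List.take_succ_cons, hgt_cons, hgt_take_refl]
      simp [MStep.val]
    · show (p ++ MStep.flat :: p.reverse.map MStep.swap).reverse.map MStep.swap = _
      rw [show p ++ MStep.flat :: p.reverse.map MStep.swap
          = (p ++ [MStep.flat]) ++ p.reverse.map MStep.swap by simp,
        List.reverse_append, List.map_append, refl_cancel, List.reverse_append,
        List.map_append]
      simp [MStep.swap]
  · intro l hl
    simp only [Finset.mem_coe, Finset.mem_filter, mem_allLists] at hl
    obtain ⟨hlen, -, hsym⟩ := hl
    have hm : m < l.length := by omega
    have hdrop1 : l.drop (m + 1) = (l.take m).reverse.map MStep.swap := by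
      conv_lhs => rw [← hsym]
      rw [← List.map_drop, List.drop_reverse, hlen, show 2 * m + 1 - (m + 1) = m by omega]
    have hswap : (l[m]'hm).swap = l[m]'hm := by
      have hb : m < (l.reverse.map MStep.swap).length := by
        simp only [List.length_map, List.length_reverse, hlen]; omega
      have hg := List.getElem_of_eq hsym hb
      rw [List.getElem_map, List.getElem_reverse] at hg
      have e : l.length - 1 - m = m := by omega
      simp only [e] at hg
      exact hg
    have hflat : l[m]'hm = MStep.flat := by
      have h3 : ∀ s : MStep, s.swap = s → s = MStep.flat := by decide
      exact h3 _ hswap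
    have hdrop : l.drop m = MStep.flat :: (l.take m).reverse.map MStep.swap := by
      rw [List.drop_eq_getElem_cons hm, hdrop1, hflat]
    conv_rhs => rw [← List.take_append_drop m l]
    rw [hdrop]
  · intro p hp
    exact List.take_left' (mem_B.1 hp).1

lemma S_both (n : ℕ) :
    ((allLists n).filter fun l => IsMotzkinPath l ∧ IsSymmetricPath l).card =
      (B (n / 2)).card := by
  rcases Nat.even_or_odd n with ⟨t, rfl⟩ | ⟨t, rfl⟩
  · rw [show t + t = 2 * t by ring, Nat.mul_div_cancel_left t (by norm_num)]
    exact S_even t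
  · rw [show (2 * t + 1) / 2 = t by omega]
    exact S_odd t

lemma main (n : ℕ) :
    symMotzkin n = ∑ i ∈ Finset.range (n + 1), (n / 2).choose i * i.choose (i / 2) := by
  have h1 : symMotzkin n = (B (n / 2)).card := by
    unfold symMotzkin
    rw [card_subtype n (fun l => IsMotzkinPath l ∧ IsSymmetricPath l),
      Finset.filter_congr_decidable]
    exact S_both n
  rw [h1, B_card]
  refine Finset.sum_subset (Finset.range_subset_range.2 (by omega)) ?_
  intro i _ hi
  simp only [Finset.mem_range, not_lt] at hi
  rw [Nat.choose_eq_zero_of_lt (by omega), zero_mul]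

end SymAux

/-- For every nonnegative integer `n`, the number of symmetric Motzkin paths of
length `n` is `Σ_i C(⌊n/2⌋, i) * C(i, ⌊i/2⌋)`. -/
theorem symMotzkin_eq_sum (n : ℕ) :
    symMotzkin n =
      ∑ i ∈ Finset.range (n + 1), (n / 2).choose i * i.choose (i / 2) :=
  SymAux.main n
end
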